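/- arXiv:2409.13339 — 7 statements merged into one kernel-verified Lean document; each statement's English description precedes it below -/
import Mathlib

section
/- Let F be a field with at least 4 elements. Then every matrix in SL_2(F) is a product of at most three commutators of unipotent matrices of index 2. Moreover: if char(F) = 2, then every matrix in SL_2(F) is a product of at most two commutators of unipotent matrices of index 2; and if char(F) ≠ 2, then every matrix in SL_2(F) is a product of at most two commutators of unipotent matrices of index 2 if and only if −1 = a² + b² for some nonzero a, b ∈ F. -/
open Matrix

variable {F : Type*} [Field F]

/-- A unipotent matrix of index 2: `A ≠ I` and `(A - I)² = 0`. -/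
def IsU2 {m : Type*} [Fintype m] [DecidableEq m] (A : Matrix m m F) : Prop :=
  A ≠ 1 ∧ (A - 1) ^ 2 = 0

/-- A commutator `X * Y * X⁻¹ * Y⁻¹` of unipotent matrices of index 2. -/
def IsCommU2 {m : Type*} [Fintype m] [DecidableEq m] (A : Matrix m m F) : Prop :=
  ∃ X Y : Matrix m m F, IsU2 X ∧ IsU2 Y ∧ A = X * Y * X⁻¹ * Y⁻¹

/-- `A` is a product of at most `k` commutators of unipotent matrices of index 2. -/
def IsProdCommU2 {m : Type*} [Fintype m] [DecidableEq m] (k : ℕ) (A : Matrix m m F) : Prop :=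
  ∃ L : List (Matrix m m F), L.length ≤ k ∧ (∀ B ∈ L, IsCommU2 B) ∧ L.prod = A

/-- `A` is a product of at most `k` unipotent matrices of index 2. -/
def IsProdU2 {m : Type*} [Fintype m] [DecidableEq m] (k : ℕ) (A : Matrix m m F) : Prop :=
  ∃ L : List (Matrix m m F), L.length ≤ k ∧ (∀ B ∈ L, IsU2 B) ∧ L.prod = A

/-!
Write a U₂-matrix as `1 + N` with `N² = 0`. For traceless `2 × 2` matrices `NM + MN = tr(NM)`,
which collapses the commutator of `1 + N` and `1 + M` to `(1 - q) + (2 + q) NM + q (M - N)`,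
`q = tr(NM)`. Hence a commutator of U₂-matrices has trace `2 + q²`, is `1` when `q = 0`, and
(comparing traces in `XYX⁻¹ = -Y`) is never `-1` outside characteristic `2`.

Conversely, a non-scalar `2 × 2` matrix is conjugate to the companion matrix of its characteristic
polynomial, so non-scalar matrices with equal trace and determinant are conjugate; in particular
every non-scalar `A ∈ SL₂(F)` of trace `2 + s²`, `s ≠ 0`, is conjugate to the commutator of
`[1, 1; 0, 1]` and `[1, 0; s, 1]`. The companion matrix of a non-scalar `A ∈ SL₂(F)` factors into
two such matrices, of traces `2 + s²` and `3`, given `u ∉ {0, 1, -1}` in `F`. Only the scalars `±1`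
remain: `-1` is a product of three commutators, and it is a product `CD` of two iff
`tr D = -tr C`, i.e. `q₁² + q₂² = -4` with `q₁, q₂ ≠ 0`.
-/

lemma exists_ne_zero_sq_ne_one (hF : 4 ≤ Cardinal.mk F) : ∃ u : F, u ≠ 0 ∧ u ^ 2 ≠ 1 := by
  classical
  by_contra! h
  have hsub : (Set.univ : Set F) ⊆ ↑({0, 1, -1} : Finset F) := fun u _ => by
    by_cases hu : u = 0
    · simp [hu]
    · simpa [hu] using sq_eq_one_iff.mp (h u hu)
  have : Cardinal.mk F ≤ 3 :=
    calc Cardinal.mk F = Cardinal.mk (Set.univ : Set F) := Cardinal.mk_univ.symm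
      _ ≤ Cardinal.mk (↑({0, 1, -1} : Finset F) : Set F) := Cardinal.mk_le_mk_of_subset hsub
      _ = (({0, 1, -1} : Finset F).card : Cardinal) := Cardinal.mk_coe_finset
      _ ≤ 3 := by exact_mod_cast Finset.card_le_three
  exact absurd (hF.trans this) (by norm_num)

section General

variable {m : Type*} [Fintype m] [DecidableEq m] {k l : ℕ} {X A B C : Matrix m m F}

namespace IsU2

lemma mul_two_sub (h : IsU2 X) : X * (2 - X) = 1 :=
  calc X * (2 - X) = 1 - (X - 1) ^ 2 := by noncomm_ring
    _ = 1 := by rw [h.2, sub_zero]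

lemma inv_eq (h : IsU2 X) : X⁻¹ = 2 - X := inv_eq_right_inv h.mul_two_sub

lemma isUnit_det (h : IsU2 X) : IsUnit X.det := isUnit_det_of_right_inverse h.mul_two_sub

lemma trace_eq (h : IsU2 X) : X.trace = Fintype.card m := by
  have hnil : (X - 1).trace = 0 := (isNilpotent_trace_of_isNilpotent ⟨2, h.2⟩).eq_zero
  rwa [trace_sub, trace_one, sub_eq_zero] at hnil

lemma map (f : Matrix m m F ≃+* Matrix m m F) (h : IsU2 X) : IsU2 (f X) :=
  ⟨(map_ne_one_iff f f.injective).mpr h.1, by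
    rw [← map_one f, ← map_sub, ← map_pow, h.2, map_zero]⟩

end IsU2

namespace IsCommU2

lemma map (f : Matrix m m F ≃+* Matrix m m F) (h : IsCommU2 C) : IsCommU2 (f C) := by
  obtain ⟨X, Y, hX, hY, rfl⟩ := h
  refine ⟨f X, f Y, hX.map f, hY.map f, ?_⟩
  simp only [map_mul, hX.inv_eq, hY.inv_eq, (hX.map f).inv_eq, (hY.map f).inv_eq, map_sub,
    map_ofNat]

lemma conj (P : GL m F) (h : IsCommU2 C) : IsCommU2 (P * C * (P⁻¹ : GL m F) : Matrix m m F) := by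
  simpa [ConjAct.units_smul_def] using
    h.map (MulSemiringAction.toRingEquiv _ _ (ConjAct.toConjAct P))

lemma det_eq_one (h : IsCommU2 C) : C.det = 1 := by
  obtain ⟨X, Y, hX, hY, rfl⟩ := h
  simp only [det_mul, det_nonsing_inv, Ring.inverse_eq_inv']
  field_simp [hX.isUnit_det.ne_zero, hY.isUnit_det.ne_zero]

lemma isProdCommU2_one (h : IsCommU2 C) : IsProdCommU2 1 C :=
  ⟨[C], by simp, by simpa using h, by simp⟩

end IsCommU2

lemma two_mul_card_eq_zero_of_isCommU2_neg_one (h : IsCommU2 (-1 : Matrix m m F)) :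
    (2 * Fintype.card m : F) = 0 := by
  obtain ⟨X, Y, hX, hY, hXY⟩ := h
  have hconj : X * Y * X⁻¹ = -Y := by
    rw [← nonsing_inv_mul_cancel_right Y (X * Y * X⁻¹) hY.isUnit_det, ← hXY, neg_one_mul]
  have := congrArg trace hconj
  rw [trace_conj ((isUnit_iff_isUnit_det X).mpr hX.isUnit_det), trace_neg, hY.trace_eq] at this
  linear_combination this

lemma isProdCommU2_one (k : ℕ) : IsProdCommU2 k (1 : Matrix m m F) :=
  ⟨[], by simp, by simp, by simp⟩

lemma IsProdCommU2.mono (hkl : k ≤ l) (h : IsProdCommU2 k A) : IsProdCommU2 l A :=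
  let ⟨L, hL, hmem, hprod⟩ := h
  ⟨L, hL.trans hkl, hmem, hprod⟩

lemma IsProdCommU2.mul (hA : IsProdCommU2 k A) (hB : IsProdCommU2 l B) :
    IsProdCommU2 (k + l) (A * B) := by
  obtain ⟨L, hL, hmemL, rfl⟩ := hA
  obtain ⟨L', hL', hmemL', rfl⟩ := hB
  refine ⟨L ++ L', by simp; omega, fun B hB => ?_, List.prod_append⟩
  rcases List.mem_append.mp hB with hB | hB
  exacts [hmemL B hB, hmemL' B hB]

end General

section FinTwo

variable {N M A C : Matrix (Fin 2) (Fin 2) F}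

lemma mul_add_mul_eq_trace_mul_smul_one (hN : N.trace = 0) (hM : M.trace = 0) :
    N * M + M * N = (N * M).trace • 1 := by
  rw [trace_fin_two, add_eq_zero_iff_eq_neg'] at hN hM
  ext i j
  fin_cases i <;> fin_cases j <;> simp [mul_apply, trace_fin_two, hN, hM] <;> ring

lemma trace_eq_zero_of_sq_eq_zero (hN : N ^ 2 = 0) : N.trace = 0 :=
  (isNilpotent_trace_of_isNilpotent ⟨2, hN⟩).eq_zero

lemma det_eq_zero_of_sq_eq_zero (hN : N ^ 2 = 0) : N.det = 0 := by
  simpa using congrArg det hN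

lemma mul_eq_zero_of_trace_mul_eq_zero (hN : N ^ 2 = 0) (hM : M ^ 2 = 0)
    (h : (N * M).trace = 0) : N * M = 0 := by
  have htN := trace_eq_zero_of_sq_eq_zero hN
  have htM := trace_eq_zero_of_sq_eq_zero hM
  have hdN := det_eq_zero_of_sq_eq_zero hN
  have hdM := det_eq_zero_of_sq_eq_zero hM
  rw [trace_fin_two, add_eq_zero_iff_eq_neg'] at htN htM
  rw [det_fin_two, htN] at hdN
  rw [det_fin_two, htM] at hdM
  simp only [trace_fin_two, mul_apply, Fin.sum_univ_two, htN, htM] at h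
  -- each entry of `N * M` has square zero
  ext i j
  fin_cases i <;> fin_cases j <;> simp [mul_apply, htN, htM]
  · linear_combination (exp := 2) N 0 1 * M 1 0 * h - M 0 0 ^ 2 * hdN + N 0 1 * N 1 0 * hdM
  · linear_combination (exp := 2) -N 0 1 * M 0 1 * h - M 0 1 ^ 2 * hdN - N 0 1 ^ 2 * hdM
  · linear_combination (exp := 2) -N 1 0 * M 1 0 * h - N 1 0 ^ 2 * hdM - M 1 0 ^ 2 * hdN
  · linear_combination (exp := 2) N 1 0 * M 0 1 * h - M 0 0 ^ 2 * hdN + N 0 1 * N 1 0 * hdM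

lemma one_add_mul_one_add_mul_one_sub_mul_one_sub (hN : N ^ 2 = 0) (hM : M ^ 2 = 0) :
    (1 + N) * (1 + M) * (1 - N) * (1 - M) =
      (1 - (N * M).trace) • 1 + (2 + (N * M).trace) • (N * M) + (N * M).trace • (M - N) := by
  set q := (N * M).trace
  have hMN : M * N = q • 1 - N * M := eq_sub_of_add_eq' <|
    mul_add_mul_eq_trace_mul_smul_one (trace_eq_zero_of_sq_eq_zero hN)
      (trace_eq_zero_of_sq_eq_zero hM)
  rw [sq] at hN hM
  have hMNM : M * N * M = q • M := by
    rw [hMN, sub_mul, smul_mul_assoc, one_mul, mul_assoc, hM, mul_zero, sub_zero]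
  have hNMN : N * M * N = q • N := by
    rw [mul_assoc, hMN, mul_sub, mul_smul_comm, mul_one, ← mul_assoc, hN, zero_mul, sub_zero]
  calc (1 + N) * (1 + M) * (1 - N) * (1 - M)
      = 1 + N * M - M * N + M * N * M - N * M * N + N * M * N * M
          - N * N + N * N * M - M * M - N * (M * M) := by noncomm_ring
    _ = _ := by
      rw [hNMN, smul_mul_assoc, hMNM, hMN, hN, hM, zero_mul, mul_zero]
      module

lemma IsCommU2.exists_trace_eq (h : IsCommU2 C) :
    ∃ q : F, C.trace = 2 + q ^ 2 ∧ (q = 0 → C = 1) := by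
  obtain ⟨X, Y, hX, hY, rfl⟩ := h
  have hXY : X * Y * X⁻¹ * Y⁻¹ =
      (1 + (X - 1)) * (1 + (Y - 1)) * (1 - (X - 1)) * (1 - (Y - 1)) := by
    rw [hX.inv_eq, hY.inv_eq]
    noncomm_ring
  rw [hXY, one_add_mul_one_add_mul_one_sub_mul_one_sub hX.2 hY.2]
  refine ⟨((X - 1) * (Y - 1)).trace, ?_, fun hq => ?_⟩
  · simp [hX.trace_eq, hY.trace_eq]
    ring
  · simp [mul_eq_zero_of_trace_mul_eq_zero hX.2 hY.2 hq]

lemma IsCommU2.ne_neg_one (h2 : (2 : F) ≠ 0) (h : IsCommU2 C) : C ≠ -1 := by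
  rintro rfl
  have h4 := two_mul_card_eq_zero_of_isCommU2_neg_one h
  rw [Fintype.card_fin, Nat.cast_ofNat, mul_self_eq_zero] at h4
  exact h2 h4

lemma trace_inv_of_det_eq_one (h : A.det = 1) : A⁻¹.trace = A.trace := by
  rw [inv_def, h, Ring.inverse_one, one_smul, adjugate_fin_two, trace_fin_two, trace_fin_two]
  simp [add_comm]

lemma isU2_upper {t : F} (ht : t ≠ 0) : IsU2 !![1, t; 0, 1] :=
  ⟨fun h => ht (by simpa using congrFun (congrFun h 0) 1), by
    ext i j; fin_cases i <;> fin_cases j <;> simp [sq, one_fin_two]⟩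

lemma isU2_lower {t : F} (ht : t ≠ 0) : IsU2 !![1, 0; t, 1] :=
  ⟨fun h => ht (by simpa using congrFun (congrFun h 1) 0), by
    ext i j; fin_cases i <;> fin_cases j <;> simp [sq, one_fin_two]⟩

lemma isCommU2_one : IsCommU2 (1 : Matrix (Fin 2) (Fin 2) F) := by
  have hX := isU2_upper (one_ne_zero (α := F))
  refine ⟨_, _, hX, hX, ?_⟩
  rw [mul_nonsing_inv_cancel_right _ _ hX.isUnit_det, mul_nonsing_inv _ hX.isUnit_det]

lemma IsProdCommU2.exists_eq_mul (h : IsProdCommU2 2 A) :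
    ∃ C D, IsCommU2 C ∧ IsCommU2 D ∧ A = C * D := by
  obtain ⟨L, hL, hmem, rfl⟩ := h
  match L, hL with
  | [], _ => exact ⟨1, 1, isCommU2_one, isCommU2_one, by simp⟩
  | [C], _ => exact ⟨C, 1, hmem C (by simp), isCommU2_one, by simp⟩
  | [C, D], _ => exact ⟨C, D, hmem C (by simp), hmem D (by simp), by simp⟩

lemma isCommU2_upper_lower_commutator {s : F} (hs : s ≠ 0) :
    IsCommU2 !![1 + s + s ^ 2, -s; s ^ 2, 1 - s] := by
  refine ⟨_, _, isU2_upper one_ne_zero, isU2_lower hs, ?_⟩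
  rw [(isU2_upper one_ne_zero).inv_eq, (isU2_lower hs).inv_eq]
  ext i j; fin_cases i <;> fin_cases j <;> simp [ofNat_fin_two, mul_apply] <;> ring

lemma notMem_range_scalar_of_apply_one_zero_ne_zero (h : A 1 0 ≠ 0) :
    A ∉ Set.range (scalar (Fin 2)) := by
  rintro ⟨a, rfl⟩
  simp at h

lemma exists_conj_companion (hA : A ∉ Set.range (scalar (Fin 2))) :
    ∃ P : GL (Fin 2) F, A = P * !![0, -A.det; 1, A.trace] * (P⁻¹ : GL (Fin 2) F) := by
  -- `P` below has columns `v = (x, y)` and `A v`; its determinant is the expression in `hxy`,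
  -- nonzero exactly when `v` is not an eigenvector of `A`
  obtain ⟨x, y, hxy⟩ :
      ∃ x y : F, A 1 0 * x ^ 2 + (A 1 1 - A 0 0) * x * y - A 0 1 * y ^ 2 ≠ 0 := by
    by_contra! h
    refine hA ⟨A 0 0, ?_⟩
    have h10 := h 1 0
    have h01 := h 0 1
    have h11 := h 1 1
    ext i j
    fin_cases i <;> fin_cases j <;> simp at h10 h01 h11 ⊢
    · exact h01.symm
    · exact h10.symm
    · linear_combination h10 - h01 - h11
  set P : Matrix (Fin 2) (Fin 2) F := !![x, A 0 0 * x + A 0 1 * y; y, A 1 0 * x + A 1 1 * y]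
  have hP : IsUnit P := by
    rw [isUnit_iff_isUnit_det, det_fin_two_of, isUnit_iff_ne_zero]
    convert hxy using 1
    ring
  refine ⟨hP.unit, ?_⟩
  rw [Units.eq_mul_inv_iff_mul_eq, IsUnit.unit_spec]
  ext i j
  fin_cases i <;> fin_cases j <;> simp [P, mul_apply, det_fin_two, trace_fin_two] <;> ring

lemma exists_conj_of_trace_eq_of_det_eq {B : Matrix (Fin 2) (Fin 2) F}
    (hA : A ∉ Set.range (scalar (Fin 2))) (hB : B ∉ Set.range (scalar (Fin 2)))
    (htr : A.trace = B.trace) (hdet : A.det = B.det) :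
    ∃ P : GL (Fin 2) F, A = P * B * (P⁻¹ : GL (Fin 2) F) := by
  obtain ⟨P, hP⟩ := exists_conj_companion hA
  obtain ⟨Q, hQ⟩ := exists_conj_companion hB
  refine ⟨P * Q⁻¹, ?_⟩
  rw [hP, hQ, htr, hdet]
  simp [mul_assoc]

lemma isCommU2_of_trace_eq (hA : A ∉ Set.range (scalar (Fin 2))) (hdet : A.det = 1) {s : F}
    (hs : s ≠ 0) (htr : A.trace = 2 + s ^ 2) : IsCommU2 A := by
  obtain ⟨P, rfl⟩ :=
    exists_conj_of_trace_eq_of_det_eq (B := !![1 + s + s ^ 2, -s; s ^ 2, 1 - s]) hA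
      (notMem_range_scalar_of_apply_one_zero_ne_zero (by simpa using hs))
      (by rw [htr, trace_fin_two_of]; ring) (by rw [hdet, det_fin_two_of]; ring)
  exact (isCommU2_upper_lower_commutator hs).conj P

lemma exists_mul_eq_sq_of_sub_eq {u : F} (hu0 : u ≠ 0) (hu : u ^ 2 ≠ 1) (t : F) :
    ∃ b c s : F, c ≠ 0 ∧ s ≠ 0 ∧ b * c = s ^ 2 ∧ c - b = t := by
  rcases eq_or_ne t 0 with rfl | ht
  · exact ⟨1, 1, 1, one_ne_zero, one_ne_zero, by ring, by ring⟩
  have hr : t / (1 - u ^ 2) ≠ 0 := div_ne_zero ht (sub_ne_zero.mpr hu.symm)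
  refine ⟨t / (1 - u ^ 2) * u ^ 2, t / (1 - u ^ 2), t / (1 - u ^ 2) * u, hr, mul_ne_zero hr hu0,
    by ring, ?_⟩
  rw [← mul_one_sub, div_mul_cancel₀ _ (sub_ne_zero.mpr hu.symm)]

lemma isProdCommU2_two_of_notMem_range_scalar {u : F} (hu0 : u ≠ 0) (hu : u ^ 2 ≠ 1)
    (hA : A ∉ Set.range (scalar (Fin 2))) (hdet : A.det = 1) : IsProdCommU2 2 A := by
  set τ := A.trace
  obtain ⟨b, c, s, hc, hs, hbc, hcb⟩ := exists_mul_eq_sq_of_sub_eq hu0 hu (3 - τ)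
  set M₁ : Matrix (Fin 2) (Fin 2) F := !![1, b; c, 1 + s ^ 2]
  set M₂ : Matrix (Fin 2) (Fin 2) F := !![-b, -(1 + s ^ 2) - b * τ; 1, c + τ]
  have h₁ : IsCommU2 M₁ := isCommU2_of_trace_eq (notMem_range_scalar_of_apply_one_zero_ne_zero hc)
    (by rw [det_fin_two_of]; linear_combination -hbc) hs (by rw [trace_fin_two_of]; ring)
  have h₂ : IsCommU2 M₂ := isCommU2_of_trace_eq
    (notMem_range_scalar_of_apply_one_zero_ne_zero (by simp [M₂]))
    (by rw [det_fin_two_of]; linear_combination -hbc) one_ne_zero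
    (by rw [trace_fin_two_of]; linear_combination hcb)
  have hprod : M₁ * M₂ = !![0, -1; 1, τ] := by
    ext i j
    fin_cases i <;> fin_cases j <;> simp [M₁, M₂]
    · linear_combination hbc
    · linear_combination -hbc
    · linear_combination -τ * hbc
  obtain ⟨P, hP⟩ := exists_conj_of_trace_eq_of_det_eq (B := M₁ * M₂) hA
    (by rw [hprod]; exact notMem_range_scalar_of_apply_one_zero_ne_zero (by simp))
    (by rw [hprod, trace_fin_two_of]; ring) (by rw [hprod, hdet, det_fin_two_of]; ring)
  have hsplit : (P * (M₁ * M₂) * (P⁻¹ : GL (Fin 2) F) : Matrix (Fin 2) (Fin 2) F) =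
      (P * M₁ * (P⁻¹ : GL (Fin 2) F)) * (P * M₂ * (P⁻¹ : GL (Fin 2) F)) := by
    simp [mul_assoc]
  rw [hP, hsplit]
  exact (h₁.conj P).isProdCommU2_one.mul (h₂.conj P).isProdCommU2_one
lemma isProdCommU2_three_neg_one {u : F} (hu0 : u ≠ 0) (hu : u ^ 2 ≠ 1) :
    IsProdCommU2 3 (-1 : Matrix (Fin 2) (Fin 2) F) := by
  have hC : IsCommU2 !![(3 : F), -1; 1, 0] := by
    convert isCommU2_upper_lower_commutator (one_ne_zero (α := F)) using 2
    norm_num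
  have hD : IsProdCommU2 2 !![(0 : F), -1; 1, -3] :=
    isProdCommU2_two_of_notMem_range_scalar hu0 hu
      (notMem_range_scalar_of_apply_one_zero_ne_zero (by simp)) (by simp [det_fin_two_of])
  convert hC.isProdCommU2_one.mul hD using 1
  ext i j
  fin_cases i <;> fin_cases j <;> simp

lemma isProdCommU2_two_neg_one_of_eq_sq_add_sq (h2 : (2 : F) ≠ 0) {a b : F} (ha : a ≠ 0)
    (hb : b ≠ 0) (hab : -1 = a ^ 2 + b ^ 2) :
    IsProdCommU2 2 (-1 : Matrix (Fin 2) (Fin 2) F) := by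
  set τ : F := 2 + (2 * a) ^ 2
  have h₁ : IsCommU2 !![0, -1; 1, τ] :=
    isCommU2_of_trace_eq (notMem_range_scalar_of_apply_one_zero_ne_zero (by simp))
      (by simp [det_fin_two_of]) (mul_ne_zero h2 ha) (by rw [trace_fin_two_of]; ring)
  have h₂ : IsCommU2 !![-τ, -1; 1, 0] :=
    isCommU2_of_trace_eq (notMem_range_scalar_of_apply_one_zero_ne_zero (by simp))
      (by simp [det_fin_two_of]) (mul_ne_zero h2 hb)
      (by rw [trace_fin_two_of]; linear_combination 4 * hab)
  convert h₁.isProdCommU2_one.mul h₂.isProdCommU2_one using 1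
  ext i j
  fin_cases i <;> fin_cases j <;> simp

lemma exists_eq_sq_add_sq_of_isProdCommU2_two_neg_one (h2 : (2 : F) ≠ 0)
    (h : IsProdCommU2 2 (-1 : Matrix (Fin 2) (Fin 2) F)) :
    ∃ a b : F, a ≠ 0 ∧ b ≠ 0 ∧ -1 = a ^ 2 + b ^ 2 := by
  obtain ⟨C, D, hC, hD, hCD⟩ := h.exists_eq_mul
  obtain ⟨q₁, htr₁, hq₁⟩ := hC.exists_trace_eq
  obtain ⟨q₂, htr₂, hq₂⟩ := hD.exists_trace_eq
  have hD_eq : D = -C⁻¹ := by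
    rw [inv_eq_right_inv (B := -D) (by rw [mul_neg, ← hCD, neg_neg]), neg_neg]
  have htr : D.trace = -C.trace := by
    rw [hD_eq, trace_neg, trace_inv_of_det_eq_one hC.det_eq_one]
  have hq₁0 : q₁ ≠ 0 := fun h0 => hD.ne_neg_one h2 (by rw [hCD, hq₁ h0, one_mul])
  have hq₂0 : q₂ ≠ 0 := fun h0 => hC.ne_neg_one h2 (by rw [hCD, hq₂ h0, mul_one])
  refine ⟨q₁ / 2, q₂ / 2, div_ne_zero hq₁0 h2, div_ne_zero hq₂0 h2, ?_⟩
  rw [htr₁, htr₂] at htr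
  field_simp
  linear_combination -htr

lemma eq_one_or_eq_neg_one_of_mem_range_scalar {A : Matrix (Fin 2) (Fin 2) F}
    (hA : A ∈ Set.range (scalar (Fin 2))) (hdet : A.det = 1) : A = 1 ∨ A = -1 := by
  obtain ⟨a, rfl⟩ := hA
  rcases (by simpa using hdet : a = 1 ∨ a = -1) with rfl | rfl
  exacts [.inl (map_one _), .inr (by rw [map_neg, map_one])]

lemma isProdCommU2_of_det_eq_one {u : F} (hu0 : u ≠ 0) (hu : u ^ 2 ≠ 1) {k : ℕ} (hk : 2 ≤ k)
    (hneg : IsProdCommU2 k (-1 : Matrix (Fin 2) (Fin 2) F)) {A : Matrix (Fin 2) (Fin 2) F}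
    (hdet : A.det = 1) : IsProdCommU2 k A := by
  by_cases hA : A ∈ Set.range (scalar (Fin 2))
  · rcases eq_one_or_eq_neg_one_of_mem_range_scalar hA hdet with rfl | rfl
    exacts [isProdCommU2_one k, hneg]
  · exact (isProdCommU2_two_of_notMem_range_scalar hu0 hu hA hdet).mono hk

end FinTwo

theorem stmt1 {F : Type*} [Field F] (hF : 4 ≤ Cardinal.mk F) :
    (∀ A : Matrix (Fin 2) (Fin 2) F, A.det = 1 → IsProdCommU2 3 A) ∧
    (ringChar F = 2 → ∀ A : Matrix (Fin 2) (Fin 2) F, A.det = 1 → IsProdCommU2 2 A) ∧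
    (ringChar F ≠ 2 →
      ((∀ A : Matrix (Fin 2) (Fin 2) F, A.det = 1 → IsProdCommU2 2 A) ↔
        ∃ a b : F, a ≠ 0 ∧ b ≠ 0 ∧ (-1 : F) = a ^ 2 + b ^ 2)) := by
  obtain ⟨u, hu0, hu⟩ := exists_ne_zero_sq_ne_one hF
  refine ⟨fun A => isProdCommU2_of_det_eq_one hu0 hu (by norm_num)
      (isProdCommU2_three_neg_one hu0 hu), fun hchar A => ?_, fun hchar => ?_⟩
  · have hneg : (-1 : Matrix (Fin 2) (Fin 2) F) = 1 := by
      rw [← map_one (scalar (Fin 2)), ← map_neg, neg_one_eq_one_iff.mpr hchar]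
    exact isProdCommU2_of_det_eq_one hu0 hu le_rfl (by rw [hneg]; exact isProdCommU2_one 2)
  · have h2 : (2 : F) ≠ 0 := Ring.two_ne_zero hchar
    exact ⟨fun h => exists_eq_sq_add_sq_of_isProdCommU2_two_neg_one h2 (h _ (by simp [det_neg])),
      fun ⟨a, b, ha, hb, hab⟩ A => isProdCommU2_of_det_eq_one hu0 hu le_rfl
        (isProdCommU2_two_neg_one_of_eq_sq_add_sq h2 ha hb hab)⟩
end

section
/- Let F be a field and let A ∈ SL_2(F) be a nonscalar matrix. Then A is a commutator of unipotent matrices of index 2 if and only if tr(A) = 2 + α² for some nonzero α ∈ F. -/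
/-!
Write the two U₂-matrices as `1 + N` and `1 + M` with `N² = M² = 0`; their commutator is then
`(1 + N)(1 + M)(1 - N)(1 - M)`. For `2 × 2` matrices a square-zero matrix has the shape
`!![a, b; c, -a]` with `a² + bc = 0`, and a direct computation gives trace `2 + tr(NM)²`.
If `tr(NM) = 0`, the entries of `NM - MN` are nilpotent, so `N` and `M` commute and the commutator
is `1`, which is scalar.

Conversely, a nonscalar `2 × 2` matrix has a cyclic vector, so it is conjugate to the companion
matrix of its characteristic polynomial; two nonscalar matrices with the same trace and determinant
are therefore conjugate. The commutator of `1 + αE₁₂` and `1 + E₂₁` has determinant `1` and trace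
`2 + α²`, and being a commutator of U₂-matrices is invariant under conjugation.
-/

open Matrix

variable {F : Type*} [Field F]

lemma commutator_eq_one_of_commute {R : Type*} [Ring R] {N M : R} (hNM : Commute N M)
    (hN : N ^ 2 = 0) (hM : M ^ 2 = 0) : (1 + N) * (1 + M) * (1 - N) * (1 - M) = 1 := by
  have h : Commute (1 + M) (1 - N) :=
    (Commute.one_left _).add_left ((Commute.one_right M).sub_right hNM.symm)
  calc (1 + N) * (1 + M) * (1 - N) * (1 - M) = (1 + N) * ((1 + M) * (1 - N)) * (1 - M) := by
        simp only [mul_assoc]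
    _ = (1 - N ^ 2) * (1 - M ^ 2) := by rw [h.eq]; noncomm_ring
    _ = 1 := by rw [hN, hM, sub_zero, one_mul]

section SquareZero

variable {m : Type*} [Fintype m] [DecidableEq m]

lemma IsU2.inv_eq_s5 {X : Matrix m m F} (hX : IsU2 X) : X⁻¹ = 1 - (X - 1) :=
  Matrix.inv_eq_right_inv <| calc
    X * (1 - (X - 1)) = 1 - (X - 1) ^ 2 := by noncomm_ring
    _ = 1 := by rw [hX.2, sub_zero]

lemma isCommU2_iff_exists_sq_eq_zero {A : Matrix m m F} :
    IsCommU2 A ↔ ∃ N M : Matrix m m F, N ≠ 0 ∧ N ^ 2 = 0 ∧ M ≠ 0 ∧ M ^ 2 = 0 ∧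
      A = (1 + N) * (1 + M) * (1 - N) * (1 - M) := by
  constructor
  · rintro ⟨X, Y, hX, hY, rfl⟩
    refine ⟨X - 1, Y - 1, sub_ne_zero.mpr hX.1, hX.2, sub_ne_zero.mpr hY.1, hY.2, ?_⟩
    rw [hX.inv_eq_s5, hY.inv_eq_s5, add_sub_cancel, add_sub_cancel]
  · rintro ⟨N, M, hN0, hN, hM0, hM, rfl⟩
    have isU2 {N : Matrix m m F} (hN0 : N ≠ 0) (hN : N ^ 2 = 0) : IsU2 (1 + N) :=
      ⟨by simpa using hN0, by rwa [add_sub_cancel_left]⟩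
    refine ⟨1 + N, 1 + M, isU2 hN0 hN, isU2 hM0 hM, ?_⟩
    rw [(isU2 hN0 hN).inv_eq_s5, (isU2 hM0 hM).inv_eq_s5, add_sub_cancel_left, add_sub_cancel_left]

lemma IsCommU2.map_s5 {A : Matrix m m F} (hA : IsCommU2 A) (e : Matrix m m F ≃+* Matrix m m F) :
    IsCommU2 (e A) := by
  obtain ⟨N, M, hN0, hN, hM0, hM, rfl⟩ := isCommU2_iff_exists_sq_eq_zero.mp hA
  exact isCommU2_iff_exists_sq_eq_zero.mpr
    ⟨e N, e M, by simpa, by rw [← map_pow, hN, map_zero], by simpa,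
      by rw [← map_pow, hM, map_zero], by simp⟩

lemma IsCommU2.conj_s5 {A P : Matrix m m F} (hA : IsCommU2 A) (hP : IsUnit P.det) :
    IsCommU2 (P * A * P⁻¹) := by
  obtain ⟨u, rfl⟩ := (Matrix.isUnit_iff_isUnit_det P).mpr hP
  simpa [ConjAct.units_smul_def] using
    hA.map_s5 (MulSemiringAction.toRingEquiv _ _ (ConjAct.toConjAct u))

lemma isCommU2_conj_iff {A P : Matrix m m F} (hP : IsUnit P.det) :
    IsCommU2 (P * A * P⁻¹) ↔ IsCommU2 A := by
  refine ⟨fun h => ?_, fun h => h.conj_s5 hP⟩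
  simpa [Matrix.nonsing_inv_nonsing_inv _ hP, mul_assoc,
      Matrix.nonsing_inv_mul_cancel_left _ _ hP, Matrix.nonsing_inv_mul _ hP]
    using h.conj_s5 (Matrix.isUnit_nonsing_inv_det _ hP)

end SquareZero

section FinTwo

variable {R : Type*} [CommRing R] [IsReduced R]

lemma exists_eq_of_sq_eq_zero_fin_two {N : Matrix (Fin 2) (Fin 2) R} (hN : N ^ 2 = 0) :
    ∃ a b c : R, a ^ 2 + b * c = 0 ∧ N = !![a, b; c, -a] := by
  have htr : N 0 0 + N 1 1 = 0 := by
    rw [← Matrix.trace_fin_two]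
    exact (Matrix.isNilpotent_trace_of_isNilpotent ⟨2, hN⟩).eq_zero
  have hdet : N 0 0 * N 1 1 - N 0 1 * N 1 0 = 0 := by
    rw [← Matrix.det_fin_two]
    exact IsNilpotent.eq_zero ⟨2, by simp [← Matrix.det_pow, hN]⟩
  have h11 : N 1 1 = -N 0 0 := by linear_combination htr
  refine ⟨N 0 0, N 0 1, N 1 0, by linear_combination -hdet + N 0 0 * htr, ?_⟩
  rw [← h11]
  exact Matrix.eta_fin_two N

variable {N M : Matrix (Fin 2) (Fin 2) R}

lemma trace_commutator_of_sq_eq_zero (hN : N ^ 2 = 0) (hM : M ^ 2 = 0) :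
    ((1 + N) * (1 + M) * (1 - N) * (1 - M)).trace = 2 + (N * M).trace ^ 2 := by
  obtain ⟨a, b, c, hN', rfl⟩ := exists_eq_of_sq_eq_zero_fin_two hN
  obtain ⟨e, f, g, hM', rfl⟩ := exists_eq_of_sq_eq_zero_fin_two hM
  simp only [Matrix.one_fin_two, Matrix.of_add_of, Matrix.of_sub_of, Matrix.cons_add_cons,
    Matrix.cons_sub_cons, Matrix.empty_add_empty, Matrix.empty_sub_empty, Matrix.mul_fin_two,
    Matrix.trace_fin_two_of]
  linear_combination (-2 - 2 * f * g - 2 * e ^ 2) * hN' - 2 * hM'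

lemma commute_of_trace_mul_eq_zero (hN : N ^ 2 = 0) (hM : M ^ 2 = 0)
    (h : (N * M).trace = 0) : Commute N M := by
  obtain ⟨a, b, c, hN', rfl⟩ := exists_eq_of_sq_eq_zero_fin_two hN
  obtain ⟨e, f, g, hM', rfl⟩ := exists_eq_of_sq_eq_zero_fin_two hM
  simp only [Matrix.mul_fin_two, Matrix.trace_fin_two_of] at h
  have eq_of_sq_sub {x y : R} (hxy : (x - y) ^ 2 = 0) : x = y :=
    sub_eq_zero.mp (IsNilpotent.eq_zero ⟨2, hxy⟩)
  have h₁ : b * e = a * f :=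
    eq_of_sq_sub (by linear_combination b ^ 2 * hM' + f ^ 2 * hN' - b * f * h)
  have h₂ : c * e = a * g :=
    eq_of_sq_sub (by linear_combination c ^ 2 * hM' + g ^ 2 * hN' - c * g * h)
  have h₃ : b * g = c * f := eq_of_sq_sub (by
    linear_combination (b * g + c * f - 2 * a * e) * h + 4 * a ^ 2 * hM' - 4 * f * g * hN')
  simp only [Commute, SemiconjBy, Matrix.mul_fin_two, EmbeddingLike.apply_eq_iff_eq,
    Matrix.vecCons_inj, and_true]
  exact ⟨⟨by linear_combination h₃, by linear_combination -2 * h₁⟩,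
    by linear_combination 2 * h₂, by linear_combination -h₃⟩

end FinTwo

lemma exists_trace_eq_of_isCommU2 {A : Matrix (Fin 2) (Fin 2) F} (hA : IsCommU2 A)
    (hns : ∀ c : F, A ≠ c • 1) : ∃ α : F, α ≠ 0 ∧ A.trace = 2 + α ^ 2 := by
  obtain ⟨N, M, -, hN, -, hM, rfl⟩ := isCommU2_iff_exists_sq_eq_zero.mp hA
  refine ⟨(N * M).trace, fun h => hns 1 ?_, trace_commutator_of_sq_eq_zero hN hM⟩
  rw [one_smul]
  exact commutator_eq_one_of_commute (commute_of_trace_mul_eq_zero hN hM h) hN hM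

-- Columns `v = (x, y)` and `A v`; by Cayley–Hamilton it conjugates `A` to its companion matrix.
def krylovMatrix {R : Type*} [CommRing R] (A : Matrix (Fin 2) (Fin 2) R) (x y : R) :
    Matrix (Fin 2) (Fin 2) R :=
  !![x, A 0 0 * x + A 0 1 * y; y, A 1 0 * x + A 1 1 * y]

lemma mul_krylovMatrix {R : Type*} [CommRing R] (A : Matrix (Fin 2) (Fin 2) R) (x y : R) :
    A * krylovMatrix A x y = krylovMatrix A x y * !![0, -A.det; 1, A.trace] := by
  nth_rewrite 1 [Matrix.eta_fin_two A]
  simp only [krylovMatrix, Matrix.det_fin_two, Matrix.trace_fin_two, Matrix.mul_fin_two,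
    EmbeddingLike.apply_eq_iff_eq, Matrix.vecCons_inj, and_true]
  refine ⟨⟨?_, ?_⟩, ?_, ?_⟩ <;> ring

lemma exists_det_krylovMatrix_ne_zero {A : Matrix (Fin 2) (Fin 2) F}
    (hns : ∀ c : F, A ≠ c • 1) : ∃ x y : F, (krylovMatrix A x y).det ≠ 0 := by
  by_contra! h
  have hdet (x y : F) : A 1 0 * x ^ 2 + (A 1 1 - A 0 0) * x * y - A 0 1 * y ^ 2 = 0 := by
    rw [← h x y, krylovMatrix, Matrix.det_fin_two_of]
    ring
  have h₁ : A 1 0 = 0 := by simpa using hdet 1 0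
  have h₂ : A 0 1 = 0 := by simpa using hdet 0 1
  have h₃ : A 1 1 = A 0 0 := by linear_combination hdet 1 1 - h₁ + h₂
  apply hns (A 0 0)
  ext i j
  fin_cases i <;> fin_cases j <;> simp [h₁, h₂, h₃]

lemma exists_eq_conj_companion {A : Matrix (Fin 2) (Fin 2) F} (hns : ∀ c : F, A ≠ c • 1) :
    ∃ P : Matrix (Fin 2) (Fin 2) F, IsUnit P.det ∧
      A = P * !![0, -A.det; 1, A.trace] * P⁻¹ := by
  obtain ⟨x, y, hxy⟩ := exists_det_krylovMatrix_ne_zero hns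
  refine ⟨krylovMatrix A x y, hxy.isUnit, ?_⟩
  rw [← mul_krylovMatrix, Matrix.mul_nonsing_inv_cancel_right _ _ hxy.isUnit]

lemma isCommU2_of_trace_eq_s5 {A : Matrix (Fin 2) (Fin 2) F} (hA : A.det = 1)
    (hns : ∀ c : F, A ≠ c • 1) {α : F} (hα : α ≠ 0) (htr : A.trace = 2 + α ^ 2) :
    IsCommU2 A := by
  set K : Matrix (Fin 2) (Fin 2) F := !![1 + α + α ^ 2, -α ^ 2; α, 1 - α]
  have hK : IsCommU2 K := isCommU2_iff_exists_sq_eq_zero.mpr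
    ⟨!![0, α; 0, 0], !![0, 0; 1, 0], fun h => hα (by simpa using congr_fun₂ h 0 1),
      by ext i j; fin_cases i <;> fin_cases j <;> simp [sq],
      fun h => by simpa using congr_fun₂ h 1 0,
      by ext i j; fin_cases i <;> fin_cases j <;> simp [sq],
      by
        simp only [K, Matrix.one_fin_two, Matrix.of_add_of, Matrix.of_sub_of,
          Matrix.cons_add_cons, Matrix.cons_sub_cons, Matrix.empty_add_empty,
          Matrix.empty_sub_empty, Matrix.mul_fin_two, EmbeddingLike.apply_eq_iff_eq,
          Matrix.vecCons_inj, and_true]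
        refine ⟨⟨?_, ?_⟩, ?_, ?_⟩ <;> ring⟩
  have hKns : ∀ c : F, K ≠ c • 1 := fun c h => hα (by simpa [K] using congr_fun₂ h 1 0)
  have hKdet : K.det = A.det := by rw [hA, Matrix.det_fin_two_of]; ring
  have hKtr : K.trace = A.trace := by rw [htr, Matrix.trace_fin_two_of]; ring
  obtain ⟨P, hP, hAP⟩ := exists_eq_conj_companion hns
  obtain ⟨Q, hQ, hKQ⟩ := exists_eq_conj_companion hKns
  rw [hAP, isCommU2_conj_iff hP, ← hKdet, ← hKtr, ← isCommU2_conj_iff hQ, ← hKQ]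
  exact hK

theorem stmt5 {F : Type*} [Field F] (A : Matrix (Fin 2) (Fin 2) F) (hA : A.det = 1)
    (hns : ∀ c : F, A ≠ c • 1) :
    IsCommU2 A ↔ ∃ α : F, α ≠ 0 ∧ A.trace = 2 + α ^ 2 :=
  ⟨fun h => exists_trace_eq_of_isCommU2 h hns,
    fun ⟨_, hα, htr⟩ => isCommU2_of_trace_eq_s5 hA hns hα htr⟩
end

section
/- Let F be a field. Any nonscalar matrix A ∈ SL_2(F) with tr(A) = 2 is not a commutator of unipotent matrices of index 2. In particular, the 2×2 Jordan block J_2(1) (the matrix with both diagonal entries 1, upper-right entry 1, lower-left entry 0) is not a commutator of unipotent matrices of index 2. -/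
open Matrix

variable {F : Type*} [Field F]

lemma keyScalar (a b c d e f : F)
    (g1 : a * a + b * c = 0) (g2 : d * d + e * f = 0)
    (hN : b ≠ 0 ∨ c ≠ 0) (hM : e ≠ 0 ∨ f ≠ 0)
    (g3 : 2 * (a * d) + b * f + c * e = 0) :
    a * d + b * f = 0 ∧ a * e - b * d = 0 ∧ c * d - a * f = 0 ∧ a * d + c * e = 0 := by
  rcases hN with hb | hc <;> rcases hM with he | hf
  · have key : a * e - b * d = 0 := by
      have sq : (a * e - b * d) ^ 2 = 0 := by
        linear_combination (-(b * e)) * g3 + e ^ 2 * g1 + b ^ 2 * g2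
      exact sq_eq_zero_iff.mp sq
    have h1 : a * d + b * f = 0 := by
      have h : e * (a * d + b * f) = 0 := by linear_combination d * key + b * g2
      exact (mul_eq_zero.mp h).resolve_left he
    refine ⟨h1, key, ?_, ?_⟩
    · have h : b * (c * d - a * f) = 0 := by linear_combination d * g1 + (-a) * h1
      exact (mul_eq_zero.mp h).resolve_left hb
    · have h : b * (a * d + c * e) = 0 := by linear_combination (-a) * key + e * g1
      exact (mul_eq_zero.mp h).resolve_left hb
  · have key : a * d + b * f = 0 := by
      have sq : (a * d + b * f) ^ 2 = 0 := by
        linear_combination (b * f) * g3 + d ^ 2 * g1 - (b * c) * g2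
      exact sq_eq_zero_iff.mp sq
    have h3 : c * d - a * f = 0 := by
      have h : b * (c * d - a * f) = 0 := by linear_combination d * g1 + (-a) * key
      exact (mul_eq_zero.mp h).resolve_left hb
    refine ⟨key, ?_, h3, ?_⟩
    · have h : f * (a * e - b * d) = 0 := by linear_combination a * g2 + (-d) * key
      exact (mul_eq_zero.mp h).resolve_left hf
    · have h : f * (a * d + c * e) = 0 := by linear_combination (-d) * h3 + c * g2
      exact (mul_eq_zero.mp h).resolve_left hf
  · have key : a * d + c * e = 0 := by
      have sq : (a * d + c * e) ^ 2 = 0 := by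
        linear_combination (c * e) * g3 + d ^ 2 * g1 - (b * c) * g2
      exact sq_eq_zero_iff.mp sq
    have h3 : c * d - a * f = 0 := by
      have h : e * (c * d - a * f) = 0 := by linear_combination d * key - a * g2
      exact (mul_eq_zero.mp h).resolve_left he
    refine ⟨?_, ?_, h3, key⟩
    · have h : c * (a * d + b * f) = 0 := by linear_combination a * h3 + f * g1
      exact (mul_eq_zero.mp h).resolve_left hc
    · have h : c * (a * e - b * d) = 0 := by linear_combination a * key - d * g1
      exact (mul_eq_zero.mp h).resolve_left hc
  · have key : c * d - a * f = 0 := by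
      have sq : (c * d - a * f) ^ 2 = 0 := by
        linear_combination (-(c * f)) * g3 + f ^ 2 * g1 + c ^ 2 * g2
      exact sq_eq_zero_iff.mp sq
    have h4 : a * d + c * e = 0 := by
      have h : f * (a * d + c * e) = 0 := by linear_combination (-d) * key + c * g2
      exact (mul_eq_zero.mp h).resolve_left hf
    refine ⟨?_, ?_, key, h4⟩
    · have h : c * (a * d + b * f) = 0 := by linear_combination a * key + f * g1
      exact (mul_eq_zero.mp h).resolve_left hc
    · have h : c * (a * e - b * d) = 0 := by linear_combination a * h4 - d * g1
      exact (mul_eq_zero.mp h).resolve_left hc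

lemma commU2_eq_one (X Y : Matrix (Fin 2) (Fin 2) F)
    (hX1 : X ≠ 1) (hX2 : (X - 1) ^ 2 = 0)
    (hY1 : Y ≠ 1) (hY2 : (Y - 1) ^ 2 = 0)
    (htr : (X * Y * X⁻¹ * Y⁻¹).trace = 2) : X * Y * X⁻¹ * Y⁻¹ = 1 := by
  rw [pow_two] at hX2 hY2
  have hx := Matrix.ext_iff.mpr hX2
  have hy := Matrix.ext_iff.mpr hY2
  have h00 := hx 0 0; have h01 := hx 0 1; have h10 := hx 1 0; have h11 := hx 1 1
  have k00 := hy 0 0; have k01 := hy 0 1; have k10 := hy 1 0; have k11 := hy 1 1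
  simp only [Matrix.mul_apply, Fin.sum_univ_two, Matrix.sub_apply, Matrix.one_apply,
    Matrix.zero_apply] at h00 h01 h10 h11 k00 k01 k10 k11
  norm_num at h00 h01 h10 h11 k00 k01 k10 k11
  -- not both off-diagonal entries of X - 1 vanish
  have hqr : X 0 1 ≠ 0 ∨ X 1 0 ≠ 0 := by
    by_contra h
    push_neg at h
    obtain ⟨hq0, hr0⟩ := h
    apply hX1
    have hp1 : X 0 0 = 1 := by
      have : (X 0 0 - 1) * (X 0 0 - 1) = 0 := by linear_combination h00 - X 1 0 * hq0
      exact sub_eq_zero.mp (mul_self_eq_zero.mp this)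
    have hs1 : X 1 1 = 1 := by
      have : (X 1 1 - 1) * (X 1 1 - 1) = 0 := by linear_combination h11 - X 0 1 * hr0
      exact sub_eq_zero.mp (mul_self_eq_zero.mp this)
    ext i j
    fin_cases i <;> fin_cases j <;>
      simp [hp1, hq0, hr0, hs1, Matrix.one_apply]
  have huv : Y 0 1 ≠ 0 ∨ Y 1 0 ≠ 0 := by
    by_contra h
    push_neg at h
    obtain ⟨hq0, hr0⟩ := h
    apply hY1
    have hp1 : Y 0 0 = 1 := by
      have : (Y 0 0 - 1) * (Y 0 0 - 1) = 0 := by linear_combination k00 - Y 1 0 * hq0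
      exact sub_eq_zero.mp (mul_self_eq_zero.mp this)
    have hs1 : Y 1 1 = 1 := by
      have : (Y 1 1 - 1) * (Y 1 1 - 1) = 0 := by linear_combination k11 - Y 0 1 * hr0
      exact sub_eq_zero.mp (mul_self_eq_zero.mp this)
    ext i j
    fin_cases i <;> fin_cases j <;>
      simp [hp1, hq0, hr0, hs1, Matrix.one_apply]
  -- trace of X-1 and Y-1 vanish
  have hsX : X 1 1 = 2 - X 0 0 := by
    rcases hqr with h | h
    · have hfac : X 0 1 * (X 0 0 + X 1 1 - 2) = 0 := by linear_combination h01
      have := (mul_eq_zero.mp hfac).resolve_left h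
      linear_combination this
    · have hfac : X 1 0 * (X 0 0 + X 1 1 - 2) = 0 := by linear_combination h10
      have := (mul_eq_zero.mp hfac).resolve_left h
      linear_combination this
  have hsY : Y 1 1 = 2 - Y 0 0 := by
    rcases huv with h | h
    · have hfac : Y 0 1 * (Y 0 0 + Y 1 1 - 2) = 0 := by linear_combination k01
      have := (mul_eq_zero.mp hfac).resolve_left h
      linear_combination this
    · have hfac : Y 1 0 * (Y 0 0 + Y 1 1 - 2) = 0 := by linear_combination k10
      have := (mul_eq_zero.mp hfac).resolve_left h
      linear_combination this
  -- concrete matrices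
  have hXeq : X = !![X 0 0, X 0 1; X 1 0, 2 - X 0 0] := by
    rw [← hsX]; exact Matrix.eta_fin_two X
  have hYeq : Y = !![Y 0 0, Y 0 1; Y 1 0, 2 - Y 0 0] := by
    rw [← hsY]; exact Matrix.eta_fin_two Y
  have hXinv : X⁻¹ = !![2 - X 0 0, -X 0 1; -X 1 0, X 0 0] := by
    apply Matrix.inv_eq_right_inv
    rw [hXeq]
    ext i j
    fin_cases i <;> fin_cases j <;>
      simp [Matrix.mul_apply, Fin.sum_univ_two, Matrix.one_apply] <;>
      first
      | ring1
      | linear_combination -h00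
  have hYinv : Y⁻¹ = !![2 - Y 0 0, -Y 0 1; -Y 1 0, Y 0 0] := by
    apply Matrix.inv_eq_right_inv
    rw [hYeq]
    ext i j
    fin_cases i <;> fin_cases j <;>
      simp [Matrix.mul_apply, Fin.sum_univ_two, Matrix.one_apply] <;>
      first
      | ring1
      | linear_combination -k00
  -- trace condition gives g3 = 0
  rw [hXinv, hYinv] at htr ⊢
  rw [hXeq, hYeq] at htr ⊢
  rw [Matrix.trace_fin_two] at htr
  simp [Matrix.mul_apply, Fin.sum_univ_two] at htr
  have hg3 : 2 * ((X 0 0 - 1) * (Y 0 0 - 1)) + X 0 1 * Y 1 0 + X 1 0 * Y 0 1 = 0 := by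
    have sq : (2 * ((X 0 0 - 1) * (Y 0 0 - 1)) + X 0 1 * Y 1 0 + X 1 0 * Y 0 1) ^ 2 = 0 := by
      linear_combination htr
        + (2 + 2 * (Y 0 1 * Y 1 0) + 2 * (Y 0 0 - 1) ^ 2) * h00 + 2 * k00
    exact sq_eq_zero_iff.mp sq
  obtain ⟨hk1, hk2, hk3, hk4⟩ :=
    keyScalar (X 0 0 - 1) (X 0 1) (X 1 0) (Y 0 0 - 1) (Y 0 1) (Y 1 0)
      (by linear_combination h00) (by linear_combination k00) hqr huv hg3
  ext i j
  fin_cases i <;> fin_cases j <;>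
    simp [Matrix.mul_apply, Fin.sum_univ_two, Matrix.one_apply]
  · linear_combination (-1 - Y 0 1 * Y 1 0 + 2 * (Y 0 0 - 1) - (Y 0 0 - 1) ^ 2) * h00
      + (-1 - 2 * (X 0 0 - 1)) * k00
      + (-1 + (Y 0 0 - 1) + X 0 1 * Y 1 0 - (X 0 0 - 1) + (X 0 0 - 1) * (Y 0 0 - 1)) * hg3
      + 2 * hk1
  · linear_combination (2 * Y 0 1) * h00 + (-2 * X 0 1) * k00
      + (Y 0 1 - X 0 1 - X 0 1 * (Y 0 0 - 1) + (X 0 0 - 1) * Y 0 1) * hg3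
      + 2 * hk2
  · linear_combination (2 * Y 1 0) * h00 + (-2 * X 1 0) * k00
      + (Y 1 0 - X 1 0 + X 1 0 * (Y 0 0 - 1) - (X 0 0 - 1) * Y 1 0) * hg3
      + 2 * hk3
  · linear_combination (-1 - Y 0 1 * Y 1 0 - 2 * (Y 0 0 - 1) - (Y 0 0 - 1) ^ 2) * h00
      + (-1 + 2 * (X 0 0 - 1)) * k00
      + (1 - (Y 0 0 - 1) + X 1 0 * Y 0 1 + (X 0 0 - 1) + (X 0 0 - 1) * (Y 0 0 - 1)) * hg3
      + (-2) * hk1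

theorem stmt6 {F : Type*} [Field F] :
    (∀ A : Matrix (Fin 2) (Fin 2) F, A.det = 1 → (∀ c : F, A ≠ c • 1) →
      A.trace = 2 → ¬ IsCommU2 A) ∧
    ¬ IsCommU2 (!![1, 1; 0, 1] : Matrix (Fin 2) (Fin 2) F) := by
  have main : ∀ A : Matrix (Fin 2) (Fin 2) F, (∀ c : F, A ≠ c • 1) →
      A.trace = 2 → ¬ IsCommU2 A := by
    intro A hns htr hcomm
    obtain ⟨X, Y, ⟨hX1, hX2⟩, ⟨hY1, hY2⟩, hA⟩ := hcomm
    rw [hA] at htr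
    have h1 : A = 1 := by
      rw [hA]
      exact commU2_eq_one X Y hX1 hX2 hY1 hY2 htr
    apply hns 1
    rw [h1, one_smul]
  constructor
  · intro A _ hns htr
    exact main A hns htr
  · apply main
    · intro c h
      have h01 := Matrix.ext_iff.mpr h 0 1
      simp [Matrix.smul_apply, Matrix.one_apply] at h01
    · simp [Matrix.trace_fin_two]
      norm_num
end

section
/- Let F be a field with char(F) ≠ 2. Then the 2×2 Jordan block J_2(−1) (the matrix with both diagonal entries −1, upper-right entry 1, lower-left entry 0), which lies in SL_2(F), is a commutator of unipotent matrices of index 2 if and only if −1 = a² for some a ∈ F. -/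
open Matrix

variable {F : Type*} [Field F]

/-! A U₂-matrix of size 2 has trace 2 and determinant 1, so the Fricke identity
`tr [X, Y] = (tr X)² + (tr Y)² + (tr XY)² - tr X · tr Y · tr XY - 2` gives
`tr [X, Y] = (tr XY - 2)² + 2`. As `tr J₂(-1) = -2`, a commutator equal to `J₂(-1)` yields
`((tr XY - 2) / 2)² = -1`. Conversely, a square root of `-1` lets one write down `X` and `Y`
explicitly. -/

namespace Matrix

variable {R : Type*} [CommRing R]

theorem det_one_add_fin_two (N : Matrix (Fin 2) (Fin 2) R) :
    (1 + N).det = 1 + N.trace + N.det := by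
  simp only [det_fin_two, trace_fin_two, add_apply, one_apply_eq, one_apply_ne, ne_eq,
    Fin.zero_eq_one_iff, Fin.one_eq_zero_iff, OfNat.ofNat_ne_one, not_false_eq_true]
  ring

theorem trace_mul_mul_adjugate_mul_adjugate_fin_two (A B : Matrix (Fin 2) (Fin 2) R) :
    trace (A * B * adjugate A * adjugate B) =
      A.det * B.trace ^ 2 + B.det * A.trace ^ 2 + (A * B).trace ^ 2
        - A.trace * B.trace * (A * B).trace - 2 * A.det * B.det := by
  simp only [adjugate_fin_two, trace_fin_two, det_fin_two, mul_apply, Fin.sum_univ_two, of_apply,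
    cons_val', cons_val_zero, cons_val_one, empty_val', cons_val_fin_one]
  ring

theorem trace_commutator_fin_two {A B : Matrix (Fin 2) (Fin 2) R} (hA : A.det = 1)
    (hB : B.det = 1) :
    trace (A * B * A⁻¹ * B⁻¹) =
      A.trace ^ 2 + B.trace ^ 2 + (A * B).trace ^ 2 - A.trace * B.trace * (A * B).trace - 2 := by
  rw [inv_def, inv_def, hA, hB, Ring.inverse_one, one_smul, one_smul,
    trace_mul_mul_adjugate_mul_adjugate_fin_two, hA, hB]
  ring

theorem eq_mul_mul_inv_mul_inv_of_mul_eq {m : Type*} [Fintype m] [DecidableEq m]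
    {A X Y : Matrix m m R} (hX : IsUnit X.det) (hY : IsUnit Y.det) (h : A * (Y * X) = X * Y) :
    A = X * Y * X⁻¹ * Y⁻¹ := by
  rw [← h, ← mul_assoc, mul_nonsing_inv_cancel_right _ _ hX, mul_nonsing_inv_cancel_right _ _ hY]

end Matrix

namespace IsU2

variable {m : Type*} [Fintype m] [DecidableEq m]

theorem trace_sub_one {X : Matrix m m F} (hX : IsU2 X) : (X - 1).trace = 0 :=
  (isNilpotent_trace_of_isNilpotent ⟨2, hX.2⟩).eq_zero

theorem det_sub_one [Nonempty m] {X : Matrix m m F} (hX : IsU2 X) : (X - 1).det = 0 :=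
  pow_eq_zero_iff two_ne_zero |>.mp <| by rw [← det_pow, hX.2, det_zero]

theorem trace_eq_two {X : Matrix (Fin 2) (Fin 2) F} (hX : IsU2 X) : X.trace = 2 := by
  simpa [trace_sub, sub_eq_zero] using hX.trace_sub_one

theorem det_eq_one {X : Matrix (Fin 2) (Fin 2) F} (hX : IsU2 X) : X.det = 1 := by
  rw [← add_sub_cancel (1 : Matrix (Fin 2) (Fin 2) F) X, det_one_add_fin_two, hX.trace_sub_one,
    hX.det_sub_one, add_zero, add_zero]

end IsU2

theorem IsCommU2.exists_trace_eq_sq_add_two {A : Matrix (Fin 2) (Fin 2) F} (hA : IsCommU2 A) :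
    ∃ s : F, A.trace = s ^ 2 + 2 := by
  obtain ⟨X, Y, hX, hY, rfl⟩ := hA
  refine ⟨(X * Y).trace - 2, ?_⟩
  rw [trace_commutator_fin_two hX.det_eq_one hY.det_eq_one, hX.trace_eq_two, hY.trace_eq_two]
  ring

theorem isCommU2_neg_jordan_of_sq_eq_neg_one {b : F} (hb : (2 * b) ^ 2 = -1) :
    IsCommU2 (!![-1, 1; 0, -1] : Matrix (Fin 2) (Fin 2) F) := by
  -- Solving `J * (Y * X) = X * Y` with `X` lower unitriangular forces this `X` and `Y`.
  have h4 : (4 : F) ≠ 0 := fun h ↦ by grind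
  have hX : IsU2 (!![1, 0; -4, 1] : Matrix (Fin 2) (Fin 2) F) := by
    refine ⟨fun h ↦ h4 ?_, ?_⟩
    · simpa using congrFun (congrFun h 1) 0
    · ext i j
      fin_cases i <;> fin_cases j <;> simp [sq, mul_apply, one_apply]
  have hY : IsU2 (!![2 - 2 * b, b; 4, 2 * b] : Matrix (Fin 2) (Fin 2) F) := by
    refine ⟨fun h ↦ h4 ?_, ?_⟩
    · simpa using congrFun (congrFun h 1) 0
    · ext i j
      fin_cases i <;> fin_cases j <;> simp [sq, mul_apply, one_apply] <;> grind
  refine ⟨_, _, hX, hY, eq_mul_mul_inv_mul_inv_of_mul_eq ?_ ?_ ?_⟩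
  · simp [hX.det_eq_one]
  · simp [hY.det_eq_one]
  · ext i j
    fin_cases i <;> fin_cases j <;> simp [mul_apply] <;> ring

theorem stmt7 {F : Type*} [Field F] (hchar : ringChar F ≠ 2) :
    IsCommU2 (!![-1, 1; 0, -1] : Matrix (Fin 2) (Fin 2) F) ↔ ∃ a : F, (-1 : F) = a ^ 2 := by
  have h2 : (2 : F) ≠ 0 := Ring.two_ne_zero hchar
  constructor
  · intro hJ
    obtain ⟨s, hs⟩ := hJ.exists_trace_eq_sq_add_two
    rw [trace_fin_two_of] at hs
    exact ⟨s / 2, by field_simp; linear_combination hs⟩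
  · rintro ⟨a, ha⟩
    exact isCommU2_neg_jordan_of_sq_eq_neg_one (b := a / 2) (by rw [mul_div_cancel₀ a h2, ha])
end

section
/- Let F be a field with char(F) ≠ 2. Then −I_2 is a product of two commutators of unipotent matrices of index 2 (i.e., −I_2 = [X₁,Y₁][X₂,Y₂] for U₂-matrices X₁,Y₁,X₂,Y₂ ∈ GL_2(F)) if and only if −1 = a² + b² for some nonzero a, b ∈ F. -/
open Matrix

variable {F : Type*} [Field F]

section Aux

private lemma u2_mul_right (X : Matrix (Fin 2) (Fin 2) F) (h : (X - 1) ^ 2 = 0) :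
    X * (2 - X) = 1 := by
  have h' : (X - 1) * (X - 1) = 0 := by rw [← sq]; exact h
  have key : X * (2 - X) - 1 = -((X - 1) * (X - 1)) := by noncomm_ring
  rw [h', neg_zero, sub_eq_zero] at key
  exact key

private lemma u2_mul_left (X : Matrix (Fin 2) (Fin 2) F) (h : (X - 1) ^ 2 = 0) :
    (2 - X) * X = 1 := by
  have h' : (X - 1) * (X - 1) = 0 := by rw [← sq]; exact h
  have key : (2 - X) * X - 1 = -((X - 1) * (X - 1)) := by noncomm_ring
  rw [h', neg_zero, sub_eq_zero] at key
  exact key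

private lemma u2_inv (X : Matrix (Fin 2) (Fin 2) F) (h : (X - 1) ^ 2 = 0) :
    X⁻¹ = 2 - X :=
  Matrix.inv_eq_right_inv (u2_mul_right X h)

private lemma nilp_trace_det {N : Matrix (Fin 2) (Fin 2) F} (hN0 : N ≠ 0) (hNN : N * N = 0) :
    Matrix.trace N = 0 ∧ N.det = 0 := by
  have hdet : N.det = 0 := by
    have : N.det * N.det = 0 := by rw [← Matrix.det_mul, hNN]; simp
    exact mul_self_eq_zero.mp this
  have hCH : N * N = Matrix.trace N • N - N.det • 1 := by
    ext i j
    fin_cases i <;> fin_cases j <;>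
      simp [Matrix.mul_apply, Fin.sum_univ_two, Matrix.trace_fin_two, Matrix.det_fin_two,
        Matrix.one_apply, Matrix.sub_apply, Matrix.smul_apply, smul_eq_mul] <;> ring
  rw [hNN, hdet, zero_smul, sub_zero] at hCH
  exact ⟨(smul_eq_zero.mp hCH.symm).resolve_right hN0, hdet⟩

private lemma u2_entries {X : Matrix (Fin 2) (Fin 2) F} (h1 : X ≠ 1) (h2 : (X - 1) ^ 2 = 0) :
    (X - 1) 1 1 = -((X - 1) 0 0) ∧
      ((X - 1) 0 0) ^ 2 + (X - 1) 0 1 * (X - 1) 1 0 = 0 := by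
  have hN0 : X - 1 ≠ 0 := sub_ne_zero.mpr h1
  have hNN : (X - 1) * (X - 1) = 0 := by rw [← sq]; exact h2
  obtain ⟨htr, hdet⟩ := nilp_trace_det hN0 hNN
  rw [Matrix.trace_fin_two] at htr
  rw [Matrix.det_fin_two] at hdet
  refine ⟨by linear_combination htr, ?_⟩
  linear_combination ((X - 1) 0 0) * htr - hdet

private lemma u2_det {X : Matrix (Fin 2) (Fin 2) F} (h1 : X ≠ 1) (h2 : (X - 1) ^ 2 = 0) :
    X.det = 1 := by
  have hN0 : X - 1 ≠ 0 := sub_ne_zero.mpr h1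
  have hNN : (X - 1) * (X - 1) = 0 := by rw [← sq]; exact h2
  obtain ⟨htr, hdet⟩ := nilp_trace_det hN0 hNN
  rw [Matrix.trace_fin_two] at htr
  rw [Matrix.det_fin_two] at hdet
  rw [Matrix.det_fin_two]
  simp only [Matrix.sub_apply, Matrix.one_apply_eq, Matrix.one_apply_ne (by decide : (0 : Fin 2) ≠ 1),
    Matrix.one_apply_ne (by decide : (1 : Fin 2) ≠ 0), sub_zero] at htr hdet
  linear_combination hdet + htr

private lemma comm_explicit {X Y : Matrix (Fin 2) (Fin 2) F}
    (hX : (X - 1) ^ 2 = 0) (hY : (Y - 1) ^ 2 = 0) :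
    X * Y * X⁻¹ * Y⁻¹ = 1 + (X - 1) * (Y - 1) - (Y - 1) * (X - 1)
      + (Y - 1) * ((X - 1) * (Y - 1)) - (X - 1) * (Y - 1) * (X - 1)
      + ((X - 1) * (Y - 1)) * ((X - 1) * (Y - 1)) := by
  rw [u2_inv X hX, u2_inv Y hY]
  have hNN : (X - 1) * (X - 1) = 0 := by rw [← sq]; exact hX
  have hMM : (Y - 1) * (Y - 1) = 0 := by rw [← sq]; exact hY
  have key : X * Y * (2 - X) * (2 - Y) - (1 + (X - 1) * (Y - 1) - (Y - 1) * (X - 1)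
      + (Y - 1) * ((X - 1) * (Y - 1)) - (X - 1) * (Y - 1) * (X - 1)
      + ((X - 1) * (Y - 1)) * ((X - 1) * (Y - 1)))
      = -((X - 1) * (X - 1)) + ((X - 1) * (X - 1)) * (Y - 1)
        - (Y - 1) * (Y - 1) - (X - 1) * ((Y - 1) * (Y - 1)) := by noncomm_ring
  rw [hNN, hMM] at key
  simp only [neg_zero, zero_mul, mul_zero, add_zero, sub_zero, zero_add] at key
  rw [sub_eq_zero] at key
  exact key

private lemma tr_adj (K : Matrix (Fin 2) (Fin 2) F) :
    Matrix.trace K.adjugate = Matrix.trace K := by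
  rw [Matrix.adjugate_fin_two, Matrix.trace_fin_two_of, Matrix.trace_fin_two]
  ring

private lemma comm_trace {X Y : Matrix (Fin 2) (Fin 2) F} (hX1 : X ≠ 1) (hY1 : Y ≠ 1)
    (hX : (X - 1) ^ 2 = 0) (hY : (Y - 1) ^ 2 = 0) :
    Matrix.trace (X * Y * X⁻¹ * Y⁻¹) = 2 + (Matrix.trace ((X - 1) * (Y - 1))) ^ 2 := by
  have hNN : (X - 1) * (X - 1) = 0 := by rw [← sq]; exact hX
  have hMM : (Y - 1) * (Y - 1) = 0 := by rw [← sq]; exact hY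
  obtain ⟨_, hdN⟩ := nilp_trace_det (sub_ne_zero.mpr hX1) hNN
  rw [comm_explicit hX hY]
  have t1 : Matrix.trace ((Y - 1) * ((X - 1) * (Y - 1))) = 0 := by
    rw [Matrix.trace_mul_comm, mul_assoc, hMM, mul_zero, Matrix.trace_zero]
  have t2 : Matrix.trace ((X - 1) * (Y - 1) * (X - 1)) = 0 := by
    rw [Matrix.trace_mul_comm, ← mul_assoc, hNN, zero_mul, Matrix.trace_zero]
  have t3 : Matrix.trace (((X - 1) * (Y - 1)) * ((X - 1) * (Y - 1)))
      = (Matrix.trace ((X - 1) * (Y - 1))) ^ 2 := by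
    have hd : ((X - 1) * (Y - 1)).det = 0 := by rw [Matrix.det_mul, hdN, zero_mul]
    have e : Matrix.trace (((X - 1) * (Y - 1)) * ((X - 1) * (Y - 1)))
        = (Matrix.trace ((X - 1) * (Y - 1))) ^ 2 - 2 * ((X - 1) * (Y - 1)).det := by
      rw [Matrix.det_fin_two, Matrix.trace_fin_two, Matrix.trace_fin_two]
      simp only [Matrix.mul_apply, Fin.sum_univ_two]
      ring
    rw [e, hd]
    ring
  have t4 : Matrix.trace ((Y - 1) * (X - 1)) = Matrix.trace ((X - 1) * (Y - 1)) :=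
    Matrix.trace_mul_comm _ _
  simp only [Matrix.trace_add, Matrix.trace_sub, t1, t2, t3, t4, Matrix.trace_one,
    Fintype.card_fin]
  push_cast
  ring

private lemma comm_det {X Y : Matrix (Fin 2) (Fin 2) F} (hX1 : X ≠ 1) (hY1 : Y ≠ 1)
    (hX : (X - 1) ^ 2 = 0) (hY : (Y - 1) ^ 2 = 0) :
    (X * Y * X⁻¹ * Y⁻¹).det = 1 := by
  rw [u2_inv X hX, u2_inv Y hY]
  have hX' : (2 - X) ≠ 1 := by
    intro h
    apply hX1
    have e : X = 2 - (2 - X) := (sub_sub_cancel 2 X).symm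
    rw [h] at e
    rw [e]
    have h21 : (2 : Matrix (Fin 2) (Fin 2) F) = 1 + 1 := one_add_one_eq_two.symm
    rw [h21]
    abel
  have hY' : (2 - Y) ≠ 1 := by
    intro h
    apply hY1
    have e : Y = 2 - (2 - Y) := (sub_sub_cancel 2 Y).symm
    rw [h] at e
    rw [e]
    have h21 : (2 : Matrix (Fin 2) (Fin 2) F) = 1 + 1 := one_add_one_eq_two.symm
    rw [h21]
    abel
  have hsX : ((2 - X) - 1) ^ 2 = 0 := by
    have e : (2 - X) - 1 = -(X - 1) := by
      have h21 : (2 : Matrix (Fin 2) (Fin 2) F) = 1 + 1 := one_add_one_eq_two.symm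
      rw [h21]; abel
    rw [e, neg_sq]
    exact hX
  have hsY : ((2 - Y) - 1) ^ 2 = 0 := by
    have e : (2 - Y) - 1 = -(Y - 1) := by
      have h21 : (2 : Matrix (Fin 2) (Fin 2) F) = 1 + 1 := one_add_one_eq_two.symm
      rw [h21]; abel
    rw [e, neg_sq]
    exact hY
  rw [Matrix.det_mul, Matrix.det_mul, Matrix.det_mul, u2_det hX1 hX, u2_det hY1 hY,
    u2_det hX' hsX, u2_det hY' hsY]
  norm_num

private lemma key_scalar {a b c e f g : F} (h1 : a ^ 2 + b * c = 0) (h2 : e ^ 2 + f * g = 0)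
    (hu : 2 * (a * e) + b * g + c * f = 0) :
    a * e + b * g = 0 ∧ a * f - b * e = 0 ∧ c * e - a * g = 0 ∧ a * e + c * f = 0 := by
  have hpq : (a * e + b * g) * (a * e + c * f) = 0 := by
    linear_combination (a * e) * hu - e ^ 2 * h1 + (b * c) * h2
  have hsum : a * e + c * f = -(a * e + b * g) := by linear_combination hu
  rw [hsum, mul_neg, neg_eq_zero, mul_self_eq_zero] at hpq
  have hq : a * e + c * f = 0 := by rw [hsum, hpq, neg_zero]
  have hr : a * f - b * e = 0 := by
    have e1 : (a * f - b * e) ^ 2 = 0 := by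
      linear_combination f ^ 2 * h1 + b ^ 2 * h2 - (b * f) * hu
    exact sq_eq_zero_iff.mp e1
  have hs : c * e - a * g = 0 := by
    have e1 : (c * e - a * g) ^ 2 = 0 := by
      linear_combination g ^ 2 * h1 + c ^ 2 * h2 - (c * g) * hu
    exact sq_eq_zero_iff.mp e1
  exact ⟨hpq, hr, hs, hq⟩

private lemma comm_eq_one {X Y : Matrix (Fin 2) (Fin 2) F} (hX : IsU2 X) (hY : IsU2 Y)
    (hu : Matrix.trace ((X - 1) * (Y - 1)) = 0) :
    X * Y * X⁻¹ * Y⁻¹ = 1 := by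
  obtain ⟨hd1, hc1⟩ := u2_entries hX.1 hX.2
  obtain ⟨hd2, hc2⟩ := u2_entries hY.1 hY.2
  simp only [Matrix.trace_fin_two, Matrix.mul_apply, Fin.sum_univ_two, hd1, hd2] at hu
  have hu' : 2 * ((X - 1) 0 0 * (Y - 1) 0 0) + (X - 1) 0 1 * (Y - 1) 1 0
      + (X - 1) 1 0 * (Y - 1) 0 1 = 0 := by linear_combination hu
  obtain ⟨hp, hr, hs, hq⟩ := key_scalar hc1 hc2 hu'
  have hNM : (X - 1) * (Y - 1) = 0 := by
    ext i j
    fin_cases i <;> fin_cases j <;>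
      simp only [Matrix.mul_apply, Fin.sum_univ_two, Matrix.zero_apply, Fin.mk_zero,
        Fin.mk_one, hd1, hd2]
    · linear_combination hp
    · linear_combination hr
    · linear_combination hs
    · linear_combination hq
  have hMN : (Y - 1) * (X - 1) = 0 := by
    ext i j
    fin_cases i <;> fin_cases j <;>
      simp only [Matrix.mul_apply, Fin.sum_univ_two, Matrix.zero_apply, Fin.mk_zero,
        Fin.mk_one, hd1, hd2]
    · linear_combination hq
    · linear_combination -hr
    · linear_combination -hs
    · linear_combination hp
  rw [comm_explicit hX.2 hY.2, hNM, hMN]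
  simp

private lemma comm_ne_neg_one (h2 : (2 : F) ≠ 0) {X Y : Matrix (Fin 2) (Fin 2) F}
    (hX : IsU2 X) (hY : IsU2 Y) :
    X * Y * X⁻¹ * Y⁻¹ ≠ -1 := by
  intro hcon
  rw [u2_inv X hX.2, u2_inv Y hY.2] at hcon
  have l1 := u2_mul_left X hX.2
  have l2 := u2_mul_left Y hY.2
  have e1 : (2 - Y) * (Y * X) = X := by rw [← mul_assoc, l2, one_mul]
  have e2 : X * Y * (2 - X) * (2 - Y) * (Y * X) = X * Y := by
    rw [mul_assoc (X * Y * (2 - X)), e1, mul_assoc (X * Y), l1, mul_one]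
  have hanti : X * Y = -(Y * X) := by
    rw [← e2, hcon, neg_one_mul]
  have hzero : X * Y + Y * X = 0 := by rw [hanti]; abel
  have hGm : X * Y + Y * X = (1 + 1 : Matrix (Fin 2) (Fin 2) F) + ((X - 1) + (X - 1))
      + ((Y - 1) + (Y - 1)) + (X - 1) * (Y - 1) + (Y - 1) * (X - 1) := by noncomm_ring
  rw [hzero] at hGm
  obtain ⟨hd1, hc1⟩ := u2_entries hX.1 hX.2
  obtain ⟨hd2, hc2⟩ := u2_entries hY.1 hY.2
  have E := Matrix.ext_iff.mpr hGm
  have E00 := E 0 0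
  have E01 := E 0 1
  have E10 := E 1 0
  have E11 := E 1 1
  simp only [Matrix.add_apply, Matrix.mul_apply, Fin.sum_univ_two, Matrix.zero_apply,
    Matrix.one_apply_eq, Matrix.one_apply_ne (by decide : (0 : Fin 2) ≠ 1),
    Matrix.one_apply_ne (by decide : (1 : Fin 2) ≠ 0), hd1, hd2] at E00 E01 E10 E11
  have hf : (Y - 1) 0 1 = -((X - 1) 0 1) := by
    have h2' : (2 : F) * ((X - 1) 0 1 + (Y - 1) 0 1) = 0 := by linear_combination -E01
    rcases mul_eq_zero.mp h2' with h | h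
    · exact absurd h h2
    · linear_combination h
  have hg : (Y - 1) 1 0 = -((X - 1) 1 0) := by
    have h2' : (2 : F) * ((X - 1) 1 0 + (Y - 1) 1 0) = 0 := by linear_combination -E10
    rcases mul_eq_zero.mp h2' with h | h
    · exact absurd h h2
    · linear_combination h
  have he : (Y - 1) 0 0 = -((X - 1) 0 0) := by
    have h2' : (2 : F) * ((2 : F) * ((X - 1) 0 0 + (Y - 1) 0 0)) = 0 := by
      linear_combination -E00 + E11
    rcases mul_eq_zero.mp h2' with h | h
    · exact absurd h h2
    rcases mul_eq_zero.mp h with h | h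
    · exact absurd h h2
    · linear_combination h
  apply h2
  linear_combination (-1 : F) * E00 + (-2 - 2 * ((X - 1) 0 0)) * he + (-((X - 1) 1 0)) * hf
    + (-((X - 1) 0 1)) * hg + 2 * hc1

private lemma isU2_conj {Q X : Matrix (Fin 2) (Fin 2) F} (hQ : IsUnit Q.det) (h : IsU2 X) :
    IsU2 (Q * X * Q⁻¹) := by
  have hQi : Q * Q⁻¹ = 1 := Matrix.mul_nonsing_inv Q hQ
  have hiQ : Q⁻¹ * Q = 1 := Matrix.nonsing_inv_mul Q hQ
  constructor
  · intro hcon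
    apply h.1
    have e : Q⁻¹ * (Q * X * Q⁻¹) * Q = X := by
      calc Q⁻¹ * (Q * X * Q⁻¹) * Q = (Q⁻¹ * Q) * X * (Q⁻¹ * Q) := by
            simp only [mul_assoc]
        _ = X := by rw [hiQ, one_mul, mul_one]
    rw [← e, hcon, mul_one, hiQ]
  · have h1 : Q * X * Q⁻¹ - 1 = Q * (X - 1) * Q⁻¹ := by
      rw [Matrix.mul_sub, mul_one, Matrix.sub_mul, hQi]
    have hXX : (X - 1) * (X - 1) = 0 := by rw [← sq]; exact h.2
    rw [h1, sq]
    calc Q * (X - 1) * Q⁻¹ * (Q * (X - 1) * Q⁻¹)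
        = Q * ((X - 1) * (Q⁻¹ * (Q * ((X - 1) * Q⁻¹)))) := by simp only [mul_assoc]
      _ = Q * ((X - 1) * ((X - 1) * Q⁻¹)) := by
          rw [Matrix.nonsing_inv_mul_cancel_left _ _ hQ]
      _ = Q * ((X - 1) * (X - 1)) * Q⁻¹ := by simp only [mul_assoc]
      _ = 0 := by rw [hXX, mul_zero, zero_mul]

private lemma conj_comm {Q X Y : Matrix (Fin 2) (Fin 2) F} (hQ : IsUnit Q.det) :
    (Q * X * Q⁻¹) * (Q * Y * Q⁻¹) * (Q * X * Q⁻¹)⁻¹ * (Q * Y * Q⁻¹)⁻¹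
      = Q * (X * Y * X⁻¹ * Y⁻¹) * Q⁻¹ := by
  rw [Matrix.mul_inv_rev (Q * X) Q⁻¹, Matrix.mul_inv_rev Q X,
    Matrix.mul_inv_rev (Q * Y) Q⁻¹, Matrix.mul_inv_rev Q Y,
    Matrix.nonsing_inv_nonsing_inv Q hQ]
  simp only [mul_assoc, Matrix.nonsing_inv_mul_cancel_left _ _ hQ]

end Aux

theorem stmt8 {F : Type*} [Field F] (hchar : ringChar F ≠ 2) :
    (∃ A B : Matrix (Fin 2) (Fin 2) F, IsCommU2 A ∧ IsCommU2 B ∧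
      A * B = (-1 : Matrix (Fin 2) (Fin 2) F)) ↔
    ∃ a b : F, a ≠ 0 ∧ b ≠ 0 ∧ (-1 : F) = a ^ 2 + b ^ 2 := by
  have h2 : (2 : F) ≠ 0 := Ring.two_ne_zero hchar
  constructor
  · rintro ⟨A, B, ⟨X1, Y1, hX1, hY1, rfl⟩, ⟨X2, Y2, hX2, hY2, rfl⟩, hAB⟩
    have hu1 : Matrix.trace ((X1 - 1) * (Y1 - 1)) ≠ 0 := by
      intro h0
      rw [comm_eq_one hX1 hY1 h0, one_mul] at hAB
      exact comm_ne_neg_one h2 hX2 hY2 hAB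
    have hu2 : Matrix.trace ((X2 - 1) * (Y2 - 1)) ≠ 0 := by
      intro h0
      rw [comm_eq_one hX2 hY2 h0, mul_one] at hAB
      exact comm_ne_neg_one h2 hX1 hY1 hAB
    have hdetA : (X1 * Y1 * X1⁻¹ * Y1⁻¹).det = 1 := comm_det hX1.1 hY1.1 hX1.2 hY1.2
    have hadj : (X1 * Y1 * X1⁻¹ * Y1⁻¹).adjugate * (X1 * Y1 * X1⁻¹ * Y1⁻¹) = 1 := by
      rw [Matrix.adjugate_mul, hdetA, one_smul]
    have hBval : X2 * Y2 * X2⁻¹ * Y2⁻¹ = -(X1 * Y1 * X1⁻¹ * Y1⁻¹).adjugate := by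
      calc X2 * Y2 * X2⁻¹ * Y2⁻¹ = 1 * (X2 * Y2 * X2⁻¹ * Y2⁻¹) := (one_mul _).symm
        _ = (X1 * Y1 * X1⁻¹ * Y1⁻¹).adjugate * (X1 * Y1 * X1⁻¹ * Y1⁻¹)
            * (X2 * Y2 * X2⁻¹ * Y2⁻¹) := by rw [hadj]
        _ = (X1 * Y1 * X1⁻¹ * Y1⁻¹).adjugate
            * (X1 * Y1 * X1⁻¹ * Y1⁻¹ * (X2 * Y2 * X2⁻¹ * Y2⁻¹)) := by rw [mul_assoc]
        _ = (X1 * Y1 * X1⁻¹ * Y1⁻¹).adjugate * (-1) := by rw [hAB]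
        _ = -(X1 * Y1 * X1⁻¹ * Y1⁻¹).adjugate := by rw [mul_neg, mul_one]
    have htrB : Matrix.trace (X2 * Y2 * X2⁻¹ * Y2⁻¹)
        = -Matrix.trace (X1 * Y1 * X1⁻¹ * Y1⁻¹) := by
      rw [hBval, Matrix.trace_neg, tr_adj]
    rw [comm_trace hX1.1 hY1.1 hX1.2 hY1.2, comm_trace hX2.1 hY2.1 hX2.2 hY2.2] at htrB
    have hkey : (Matrix.trace ((X1 - 1) * (Y1 - 1))) ^ 2
        + (Matrix.trace ((X2 - 1) * (Y2 - 1))) ^ 2 = -4 := by linear_combination htrB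
    refine ⟨Matrix.trace ((X1 - 1) * (Y1 - 1)) / 2, Matrix.trace ((X2 - 1) * (Y2 - 1)) / 2,
      div_ne_zero hu1 h2, div_ne_zero hu2 h2, ?_⟩
    field_simp
    linear_combination -hkey
  · rintro ⟨a, b, ha, hb, hab⟩
    set s : F := 2 * a with hs_def
    set t : F := 2 * b with ht_def
    have hs : s ≠ 0 := mul_ne_zero h2 ha
    have ht : t ≠ 0 := mul_ne_zero h2 hb
    have h4 : s ^ 2 + t ^ 2 = -4 := by rw [hs_def, ht_def]; linear_combination -4 * hab
    set w : F := s ^ 2 + s - t + 2 with hw_def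
    set Q : Matrix (Fin 2) (Fin 2) F := !![t ^ 2, w; 0, s ^ 2] with hQ_def
    have hdQ : IsUnit Q.det := by
      rw [hQ_def, Matrix.det_fin_two_of]
      apply isUnit_iff_ne_zero.mpr
      have : t ^ 2 * s ^ 2 - w * 0 = t ^ 2 * s ^ 2 := by ring
      rw [this]
      exact mul_ne_zero (pow_ne_zero 2 ht) (pow_ne_zero 2 hs)
    -- the four unipotent matrices
    have hU2a : IsU2 (!![1, 1; 0, 1] : Matrix (Fin 2) (Fin 2) F) := by
      constructor
      · intro h
        have := Matrix.ext_iff.mpr h 0 1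
        simp [Matrix.one_apply] at this
      · rw [sq]
        ext i j
        fin_cases i <;> fin_cases j <;>
          simp [Matrix.mul_apply, Fin.sum_univ_two, Matrix.sub_apply, Matrix.one_apply]
    have hU2Y1 : IsU2 (!![1, 0; s, 1] : Matrix (Fin 2) (Fin 2) F) := by
      constructor
      · intro h
        have := Matrix.ext_iff.mpr h 1 0
        simp [Matrix.one_apply] at this
        exact hs this
      · rw [sq]
        ext i j
        fin_cases i <;> fin_cases j <;>
          simp [Matrix.mul_apply, Fin.sum_univ_two, Matrix.sub_apply, Matrix.one_apply]
    have hU2Yt : IsU2 (!![1, 0; t, 1] : Matrix (Fin 2) (Fin 2) F) := by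
      constructor
      · intro h
        have := Matrix.ext_iff.mpr h 1 0
        simp [Matrix.one_apply] at this
        exact ht this
      · rw [sq]
        ext i j
        fin_cases i <;> fin_cases j <;>
          simp [Matrix.mul_apply, Fin.sum_univ_two, Matrix.sub_apply, Matrix.one_apply]
    -- explicit inverses
    have hinva : (!![1, 1; 0, 1] : Matrix (Fin 2) (Fin 2) F)⁻¹ = !![1, -1; 0, 1] := by
      apply Matrix.inv_eq_right_inv
      ext i j
      fin_cases i <;> fin_cases j <;>
        simp [Matrix.mul_apply, Fin.sum_univ_two, Matrix.one_apply]
    have hinvY1 : (!![1, 0; s, 1] : Matrix (Fin 2) (Fin 2) F)⁻¹ = !![1, 0; -s, 1] := by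
      apply Matrix.inv_eq_right_inv
      ext i j
      fin_cases i <;> fin_cases j <;>
        simp [Matrix.mul_apply, Fin.sum_univ_two, Matrix.one_apply]
    have hinvYt : (!![1, 0; t, 1] : Matrix (Fin 2) (Fin 2) F)⁻¹ = !![1, 0; -t, 1] := by
      apply Matrix.inv_eq_right_inv
      ext i j
      fin_cases i <;> fin_cases j <;>
        simp [Matrix.mul_apply, Fin.sum_univ_two, Matrix.one_apply]
    -- explicit commutators
    have hC1 : (!![1, 1; 0, 1] : Matrix (Fin 2) (Fin 2) F) * !![1, 0; s, 1]
        * (!![1, 1; 0, 1] : Matrix (Fin 2) (Fin 2) F)⁻¹ * (!![1, 0; s, 1] : Matrix (Fin 2) (Fin 2) F)⁻¹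
        = !![s ^ 2 + s + 1, -s; s ^ 2, 1 - s] := by
      rw [hinva, hinvY1]
      ext i j
      fin_cases i <;> fin_cases j <;>
        simp [Matrix.mul_apply, Fin.sum_univ_two] <;> ring
    have hC2 : (!![1, 1; 0, 1] : Matrix (Fin 2) (Fin 2) F) * !![1, 0; t, 1]
        * (!![1, 1; 0, 1] : Matrix (Fin 2) (Fin 2) F)⁻¹ * (!![1, 0; t, 1] : Matrix (Fin 2) (Fin 2) F)⁻¹
        = !![t ^ 2 + t + 1, -t; t ^ 2, 1 - t] := by
      rw [hinva, hinvYt]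
      ext i j
      fin_cases i <;> fin_cases j <;>
        simp [Matrix.mul_apply, Fin.sum_univ_two] <;> ring
    -- key polynomial identity
    have hKey : (!![s ^ 2 + s + 1, -s; s ^ 2, 1 - s] : Matrix (Fin 2) (Fin 2) F) * Q
        * !![t ^ 2 + t + 1, -t; t ^ 2, 1 - t] = -Q := by
      rw [hQ_def, hw_def]
      ext i j
      fin_cases i <;> fin_cases j <;>
        simp [Matrix.mul_apply, Fin.sum_univ_two, Matrix.neg_apply]
      · linear_combination (t ^ 2 + s * t ^ 2 + s ^ 2 * t ^ 2) * h4
      · linear_combination (1 - t + s - s * t + s ^ 2 - s ^ 2 * t) * h4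
      · linear_combination (s ^ 2 * t ^ 2) * h4
      · linear_combination (s ^ 2 - s ^ 2 * t) * h4
    refine ⟨!![1, 1; 0, 1] * !![1, 0; s, 1] * (!![1, 1; 0, 1] : Matrix (Fin 2) (Fin 2) F)⁻¹
        * (!![1, 0; s, 1] : Matrix (Fin 2) (Fin 2) F)⁻¹,
      (Q * !![1, 1; 0, 1] * Q⁻¹) * (Q * !![1, 0; t, 1] * Q⁻¹) * (Q * !![1, 1; 0, 1] * Q⁻¹)⁻¹
        * (Q * !![1, 0; t, 1] * Q⁻¹)⁻¹,
      ⟨_, _, hU2a, hU2Y1, rfl⟩,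
      ⟨_, _, isU2_conj hdQ hU2a, isU2_conj hdQ hU2Yt, rfl⟩, ?_⟩
    rw [conj_comm hdQ, hC1, hC2]
    calc !![s ^ 2 + s + 1, -s; s ^ 2, 1 - s]
          * (Q * !![t ^ 2 + t + 1, -t; t ^ 2, 1 - t] * Q⁻¹)
        = (!![s ^ 2 + s + 1, -s; s ^ 2, 1 - s] * Q * !![t ^ 2 + t + 1, -t; t ^ 2, 1 - t])
          * Q⁻¹ := by
          rw [← mul_assoc, ← mul_assoc]
      _ = (-Q) * Q⁻¹ := by rw [hKey]
      _ = -(Q * Q⁻¹) := by rw [neg_mul]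
      _ = -1 := by rw [Matrix.mul_nonsing_inv Q hdQ]
end

section
/- Let F be a field whose cardinality is not 2, 3, or 5 (in particular F may be infinite). If −1 = a² for some a ∈ F, then −I_2 ∈ SL_2(F) is a product of at most two commutators of unipotent matrices of index 2. -/
open Matrix

variable {F : Type*} [Field F]

lemma aux_fin_two_ext {F : Type*} [Field F] {a b c d e f g h : F} (h1 : a = e) (h2 : b = f)
    (h3 : c = g) (h4 : d = h) : !![a,b;c,d] = !![e,f;g,h] := by
  subst h1; subst h2; subst h3; subst h4; rfl

lemma aux_sub_fin_two {F : Type*} [Field F] (a b c d e f g h : F) :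
    !![a,b;c,d] - !![e,f;g,h] = !![a-e,b-f;c-g,d-h] := by
  ext i j; fin_cases i <;> fin_cases j <;> simp

lemma aux_zero_fin_two {F : Type*} [Field F] : (0 : Matrix (Fin 2) (Fin 2) F) = !![0,0;0,0] := by
  ext i j; fin_cases i <;> fin_cases j <;> simp

lemma aux_neg_one_fin_two {F : Type*} [Field F] :
    (-1 : Matrix (Fin 2) (Fin 2) F) = !![-1,0;0,-1] := by
  ext i j; fin_cases i <;> fin_cases j <;> simp [Matrix.one_apply]

lemma aux_exists_c {F : Type*} [Field F] (h2 : Cardinal.mk F ≠ 2) (h3 : Cardinal.mk F ≠ 3)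
    (h5 : Cardinal.mk F ≠ 5) (hchar : (-1 : F) ≠ 1) : ∃ c : F, c ≠ 0 ∧ c ^ 4 ≠ 1 := by
  classical
  by_contra hcon
  push_neg at hcon
  set q : Polynomial F := Polynomial.X ^ 5 - Polynomial.X with hqdef
  have hqd : q.natDegree = 5 := by
    rw [hqdef]; compute_degree!
  have hq0 : q ≠ 0 := fun h => by simp [h] at hqd
  have hroot : ∀ x : F, q.IsRoot x := by
    intro x
    rcases eq_or_ne x 0 with h | h
    · simp [hqdef, Polynomial.IsRoot, h]
    · have h4 := hcon x h
      simp only [hqdef, Polynomial.IsRoot, Polynomial.eval_sub, Polynomial.eval_pow,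
        Polynomial.eval_X, sub_eq_zero]
      calc x ^ 5 = x ^ 4 * x := by ring
        _ = x := by rw [h4, one_mul]
  have hfin : Finite F := by
    rw [← Set.finite_univ_iff]
    exact Set.Finite.subset (Polynomial.finite_setOf_isRoot hq0) (fun x _ => hroot x)
  cases nonempty_fintype F
  have hsub : (Finset.univ : Finset F) ⊆ q.roots.toFinset := by
    intro x _
    simp only [Multiset.mem_toFinset, Polynomial.mem_roots hq0]
    exact hroot x
  have hcard : Fintype.card F ≤ 5 := by
    calc Fintype.card F = (Finset.univ : Finset F).card := rfl
      _ ≤ q.roots.toFinset.card := Finset.card_le_card hsub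
      _ ≤ Multiset.card q.roots := Multiset.toFinset_card_le _
      _ ≤ q.natDegree := Polynomial.card_roots' q
      _ = 5 := hqd
  have hmk := Cardinal.mk_fintype F
  have hc2 : Fintype.card F ≠ 2 := fun h => h2 (by rw [hmk, h]; norm_num)
  have hc3 : Fintype.card F ≠ 3 := fun h => h3 (by rw [hmk, h]; norm_num)
  have hc5 : Fintype.card F ≠ 5 := fun h => h5 (by rw [hmk, h]; norm_num)
  have hge : 2 ≤ Fintype.card F := Fintype.one_lt_card
  have hc4 : Fintype.card F = 4 := by omega
  have h40 : ((Fintype.card F : ℕ) : F) = 0 := FiniteField.cast_card_eq_zero F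
  rw [hc4] at h40
  have h40' : (4 : F) = 0 := by exact_mod_cast h40
  have h20 : (2 : F) = 0 := by
    have hh : ((2 : F)) ^ 2 = 0 := by linear_combination h40'
    exact pow_eq_zero_iff (n := 2) (by norm_num) |>.mp hh
  exact hchar (by linear_combination -h20)

lemma aux_isCommU2 {F : Type*} [Field F] {X Y XI YI A : Matrix (Fin 2) (Fin 2) F}
    (hX : IsU2 X) (hY : IsU2 Y)
    (hXI : X * XI = 1) (hYI : Y * YI = 1) (hA : A = X * Y * XI * YI) : IsCommU2 A :=
  ⟨X, Y, hX, hY, by rw [hA, Matrix.inv_eq_right_inv hXI, Matrix.inv_eq_right_inv hYI]⟩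

set_option maxHeartbeats 1000000 in
theorem stmt12 {F : Type*} [Field F] (h2 : Cardinal.mk F ≠ 2) (h3 : Cardinal.mk F ≠ 3)
    (h5 : Cardinal.mk F ≠ 5) (hsq : ∃ a : F, (-1 : F) = a ^ 2) :
    IsProdCommU2 2 (-1 : Matrix (Fin 2) (Fin 2) F) := by
  obtain ⟨a, ha⟩ := hsq
  by_cases hchar : (-1 : F) = 1
  · refine ⟨[], by norm_num, by simp, ?_⟩
    simp only [List.prod_nil]
    ext i j
    rw [Matrix.neg_apply]
    rcases eq_or_ne i j with h | h
    · subst h; rw [Matrix.one_apply_eq]; linear_combination -hchar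
    · rw [Matrix.one_apply_ne h]; ring
  · obtain ⟨c, hc0, hc4⟩ := aux_exists_c h2 h3 h5 hchar
    obtain ⟨t, htdef⟩ : ∃ t : F, t = a * (c + c⁻¹) := ⟨_, rfl⟩
    obtain ⟨s, hsdef⟩ : ∃ s : F, s = c - c⁻¹ := ⟨_, rfl⟩
    have hci : c * c⁻¹ = 1 := mul_inv_cancel₀ hc0
    have ha0 : a ≠ 0 := by
      intro h; rw [h] at ha; exact hchar (by linear_combination 2 * ha)
    have ht0 : t ≠ 0 := by
      intro h
      apply hc4
      have hcc : c + c⁻¹ = 0 := by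
        rcases mul_eq_zero.mp (htdef.symm.trans h) with h' | h'
        · exact absurd h' ha0
        · exact h'
      have hcsq : c ^ 2 = -1 := by
        linear_combination c * hcc - hci
      calc c ^ 4 = (c ^ 2) ^ 2 := by ring
        _ = 1 := by rw [hcsq]; ring
    have hs0 : s ≠ 0 := by
      intro h
      apply hc4
      have hcsq : c ^ 2 = 1 := by
        have h' := hsdef.symm.trans h
        linear_combination c * h' + hci
      calc c ^ 4 = (c ^ 2) ^ 2 := by ring
        _ = 1 := by rw [hcsq]; ring
    have hst : s ^ 2 = -4 - t ^ 2 := by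
      rw [hsdef, htdef]
      linear_combination (-(c + c⁻¹)^2) * ha + (-4 : F) * hci
    obtain ⟨k, hkdef⟩ : ∃ k : F, k = t ^ 2 + t - s + 2 := ⟨_, rfl⟩
    obtain ⟨si, hsi⟩ : ∃ x : F, s * x = 1 := ⟨s⁻¹, mul_inv_cancel₀ hs0⟩
    obtain ⟨ti, hti⟩ : ∃ x : F, t * x = 1 := ⟨t⁻¹, mul_inv_cancel₀ ht0⟩
    refine ⟨[!![1,1;0,1] * !![1,0;t,1] * !![1,-1;0,1] * !![1,0;-t,1],
             !![1, s^2*ti^2; 0, 1] * !![(s+k)*si, -(k^2*si*ti^2); t^2*si, (s-k)*si] * !![1, -(s^2*ti^2); 0, 1] * !![(s-k)*si, k^2*si*ti^2; -(t^2*si), (s+k)*si]],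
           by norm_num, ?_, ?_⟩
    · intro B hB
      simp only [List.mem_cons, List.not_mem_nil, or_false] at hB
      rcases hB with hB | hB
      · refine aux_isCommU2 ?_ ?_ ?_ ?_ hB
        · constructor
          · intro h
            have h01 := congr_fun (congr_fun h 0) 1
            simp [Matrix.one_apply] at h01
          · rw [Matrix.one_fin_two, pow_two, aux_sub_fin_two, Matrix.mul_fin_two,
              aux_zero_fin_two]
            refine aux_fin_two_ext ?_ ?_ ?_ ?_ <;> ring
        · constructor
          · intro h
            have h10 := congr_fun (congr_fun h 1) 0
            simp [Matrix.one_apply] at h10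
            exact ht0 h10
          · rw [Matrix.one_fin_two, pow_two, aux_sub_fin_two, Matrix.mul_fin_two,
              aux_zero_fin_two]
            refine aux_fin_two_ext ?_ ?_ ?_ ?_ <;> ring
        · rw [Matrix.mul_fin_two, Matrix.one_fin_two]
          refine aux_fin_two_ext ?_ ?_ ?_ ?_ <;> ring
        · rw [Matrix.mul_fin_two, Matrix.one_fin_two]
          refine aux_fin_two_ext ?_ ?_ ?_ ?_ <;> ring
      · refine aux_isCommU2 ?_ ?_ ?_ ?_ hB
        · constructor
          · intro h
            have h01 := congr_fun (congr_fun h 0) 1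
            simp [Matrix.one_apply] at h01
            rcases h01 with h' | h'
            · exact hs0 h'
            · rw [h', mul_zero] at hti; exact one_ne_zero hti.symm
          · subst hkdef
            rw [Matrix.one_fin_two, pow_two, aux_sub_fin_two, Matrix.mul_fin_two,
              aux_zero_fin_two]
            refine aux_fin_two_ext ?_ ?_ ?_ ?_
            · ring
            · ring
            · ring
            · ring
        · constructor
          · intro h
            have h10 := congr_fun (congr_fun h 1) 0
            simp [Matrix.one_apply] at h10
            rcases h10 with h' | h'
            · exact ht0 h'
            · rw [h', mul_zero] at hsi; exact one_ne_zero hsi.symm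
          · subst hkdef
            rw [Matrix.one_fin_two, pow_two, aux_sub_fin_two, Matrix.mul_fin_two,
              aux_zero_fin_two]
            refine aux_fin_two_ext ?_ ?_ ?_ ?_
            · linear_combination ((-1)*t^2*ti^2 + (4)*t^2*si*ti^2 + (2)*t^3*si*ti^2 + (2)*t^4*si*ti^2 + (-1)*s*t^2*si*ti^2) * hsi + ((-1) + (4)*si + (-4)*si^2 + (-1)*t*ti + (2)*t*si + (4)*t*si*ti + (-4)*t*si^2 + (-4)*t*si^2*ti + (2)*t^2*si + (2)*t^2*si*ti + (-5)*t^2*si^2 + (-4)*t^2*si^2*ti + (2)*t^3*si*ti + (-2)*t^3*si^2 + (-5)*t^3*si^2*ti + (-1)*t^4*si^2 + (-2)*t^4*si^2*ti + (-1)*t^5*si^2*ti) * hti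
            · linear_combination ((-8)*si*ti^2 + (-8)*t*si*ti^2 + (-10)*t^2*si*ti^2 + (-4)*t^3*si*ti^2 + (-2)*t^4*si*ti^2 + (0)*s*ti^2 + (8)*s*si*ti^2 + (4)*s*t*si*ti^2 + (4)*s*t^2*si*ti^2 + (-2)*s^2*si*ti^2) * hsi
            · linear_combination ((2)*t^2*si) * hsi
            · linear_combination ((-8)*si + (-4)*t*si + (-1)*t^2*ti^2 + (-4)*t^2*si + (4)*t^2*si*ti^2 + (2)*t^3*si*ti^2 + (2)*t^4*si*ti^2 + (4)*s*si + (-1)*s*t^2*si*ti^2) * hsi + ((-1) + (4)*si + (-4)*si^2 + (-1)*t*ti + (2)*t*si + (4)*t*si*ti + (-4)*t*si^2 + (-4)*t*si^2*ti + (2)*t^2*si + (2)*t^2*si*ti + (-5)*t^2*si^2 + (-4)*t^2*si^2*ti + (2)*t^3*si*ti + (-2)*t^3*si^2 + (-5)*t^3*si^2*ti + (-1)*t^4*si^2 + (-2)*t^4*si^2*ti + (-1)*t^5*si^2*ti) * hti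
        · subst hkdef
          rw [Matrix.mul_fin_two, Matrix.one_fin_two]
          refine aux_fin_two_ext ?_ ?_ ?_ ?_
          · ring
          · ring
          · ring
          · ring
        · subst hkdef
          rw [Matrix.mul_fin_two, Matrix.one_fin_two]
          refine aux_fin_two_ext ?_ ?_ ?_ ?_
          · linear_combination ((4)*si + (2)*t*si + t^2*ti^2 + (2)*t^2*si + (-4)*t^2*si*ti^2 + (-2)*t^3*si*ti^2 + (-2)*t^4*si*ti^2 + s*t^2*si*ti^2) * hsi + ((1) + (-4)*si + (4)*si^2 + t*ti + (-2)*t*si + (-4)*t*si*ti + (4)*t*si^2 + (4)*t*si^2*ti + (-2)*t^2*si + (-2)*t^2*si*ti + (5)*t^2*si^2 + (4)*t^2*si^2*ti + (-2)*t^3*si*ti + (2)*t^3*si^2 + (5)*t^3*si^2*ti + t^4*si^2 + (2)*t^4*si^2*ti + t^5*si^2*ti) * hti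
          · ring
          · ring
          · linear_combination ((4)*si + (2)*t*si + t^2*ti^2 + (2)*t^2*si + (-4)*t^2*si*ti^2 + (-2)*t^3*si*ti^2 + (-2)*t^4*si*ti^2 + s*t^2*si*ti^2) * hsi + ((1) + (-4)*si + (4)*si^2 + t*ti + (-2)*t*si + (-4)*t*si*ti + (4)*t*si^2 + (4)*t*si^2*ti + (-2)*t^2*si + (-2)*t^2*si*ti + (5)*t^2*si^2 + (4)*t^2*si^2*ti + (-2)*t^3*si*ti + (2)*t^3*si^2 + (5)*t^3*si^2*ti + t^4*si^2 + (2)*t^4*si^2*ti + t^5*si^2*ti) * hti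
    · simp only [List.prod_cons, List.prod_nil, mul_one]
      have hC2 : !![1, s^2*ti^2; 0, 1] * !![(s+k)*si, -(k^2*si*ti^2); t^2*si, (s-k)*si] * !![1, -(s^2*ti^2); 0, 1] * !![(s-k)*si, k^2*si*ti^2; -(t^2*si), (s+k)*si] = !![t-1, -t; t^2, -1-t-t^2] := by
        subst hkdef
        rw [Matrix.mul_fin_two, Matrix.mul_fin_two, Matrix.mul_fin_two]
        refine aux_fin_two_ext ?_ ?_ ?_ ?_
        · linear_combination ((4)*si + (2)*t*si + (3)*t^2*ti^2 + (2)*t^2*si + (-4)*t^2*si*ti^2 + t^3*ti^2 + (-2)*t^3*si*ti^2 + t^4*ti^2 + (-2)*t^4*si*ti^2 + (3)*s*t^2*si*ti^2 + s*t^3*si*ti^2 + s*t^4*si*ti^2 + s^2*t^4*ti^4 + s^3*t^4*si*ti^4) * hsi + ((3) + (-4)*si + (4)*si^2 + t + (3)*t*ti + (-2)*t*si + (-4)*t*si*ti + (4)*t*si^2 + (4)*t*si^2*ti + t^2 + t^2*ti + (-2)*t^2*si + (-2)*t^2*si*ti + (5)*t^2*si^2 + (4)*t^2*si^2*ti + t^3*ti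 + (-2)*t^3*si*ti + (2)*t^3*si^2 + (5)*t^3*si^2*ti + t^4*si^2 + (2)*t^4*si^2*ti + t^5*si^2*ti + s^2 + s^2*t*ti + s^2*t^2*ti^2 + s^2*t^3*ti^3) * hti + ((1)) * hst
        · linear_combination ((-8)*ti^2 + (-8)*t*ti^2 + (-10)*t^2*ti^2 + (4)*t^2*ti^4 + (-4)*t^3*ti^2 + (4)*t^3*ti^4 + (-2)*t^4*ti^2 + (5)*t^4*ti^4 + (2)*t^5*ti^4 + t^6*ti^4 + (4)*s*ti^2 + (-8)*s*si*ti^2 + (2)*s*t*ti^2 + (-8)*s*t*si*ti^2 + (2)*s*t^2*ti^2 + (-4)*s*t^2*ti^4 + (-10)*s*t^2*si*ti^2 + (4)*s*t^2*si*ti^4 + (-2)*s*t^3*ti^4 + (-4)*s*t^3*si*ti^2 + (4)*s*t^3*si*ti^4 + (-2)*s*t^4*ti^4 + (-2)*s*t^4*si*ti^2 + (5)*s*t^4*si*ti^4 + (2)*s*t^5*si*ti^4 + s*t^6*si*ti^4 + (4)*s^2*si*ti^2 + (2)*s^2*t*si*ti^2 + (-1)*s^2*t^2*ti^4 + (2)*s^2*t^2*si*ti^2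 + (-4)*s^2*t^2*si*ti^4 + (-1)*s^2*t^3*ti^4 + (-2)*s^2*t^3*si*ti^4 + (-1)*s^2*t^4*ti^4 + (-2)*s^2*t^4*si*ti^4 + (-1)*s^3*t^2*si*ti^4 + (-1)*s^3*t^3*si*ti^4 + (-1)*s^3*t^4*si*ti^4) * hsi + ((-4) + (-4)*ti + (4)*ti^2 + (-1)*t + (-4)*t*ti + (4)*t*ti^2 + (4)*t*ti^3 + (-1)*t^2 + (-2)*t^2*ti + (5)*t^2*ti^2 + (4)*t^2*ti^3 + (-1)*t^3*ti + (2)*t^3*ti^2 + (5)*t^3*ti^3 + t^4*ti^2 + (2)*t^4*ti^3 + t^5*ti^3 + (0)*s + (0)*s*ti + (-4)*s*ti^2 + (0)*s*t*ti + (-2)*s*t*ti^2 + (-4)*s*t*ti^3 + (-2)*s*t^2*ti^2 + (-2)*s*t^2*ti^3 + (-2)*s*t^3*ti^3 + (-1)*s^2 + (-1)*s^2*ti + (-1)*s^2*ti^2 + (-1)*s^2*t*ti + (-1)*s^2*t*ti^2 + (-1)*s^2*t*ti^3 + (-1)*s^2*t^2*ti^2 + (-1)*s^2*t^2*ti^3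 + (-1)*s^2*t^3*ti^3) * hti + ((-1) + (-1)*ti + (-1)*ti^2) * hst
        · linear_combination (t^4*ti^2 + s*t^4*si*ti^2) * hsi + (t^2 + t^3*ti) * hti
        · linear_combination ((4)*si + (2)*t*si + (-1)*t^2*ti^2 + (2)*t^2*si + (-4)*t^2*si*ti^2 + (-1)*t^3*ti^2 + (-2)*t^3*si*ti^2 + (-1)*t^4*ti^2 + (-2)*t^4*si*ti^2 + (-1)*s*t^2*si*ti^2 + (-1)*s*t^3*si*ti^2 + (-1)*s*t^4*si*ti^2) * hsi + ((-1) + (-4)*si + (4)*si^2 + (-1)*t + (-1)*t*ti + (-2)*t*si + (-4)*t*si*ti + (4)*t*si^2 + (4)*t*si^2*ti + (-1)*t^2 + (-1)*t^2*ti + (-2)*t^2*si + (-2)*t^2*si*ti + (5)*t^2*si^2 + (4)*t^2*si^2*ti + (-1)*t^3*ti + (-2)*t^3*si*ti + (2)*t^3*si^2 + (5)*t^3*si^2*ti + t^4*si^2 + (2)*t^4*si^2*ti + t^5*si^2*ti) * hti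
      rw [hC2, Matrix.mul_fin_two, Matrix.mul_fin_two, Matrix.mul_fin_two,
        Matrix.mul_fin_two, aux_neg_one_fin_two]
      refine aux_fin_two_ext ?_ ?_ ?_ ?_ <;> ring
end

section
/- Let F be a field and n ≥ 1. Then the (n+2)×(n+2) block-diagonal matrix I_n ⊕ J_2(1), where J_2(1) is the 2×2 Jordan block with diagonal entries 1 and upper-right entry 1, is a commutator of unipotent matrices of index 2. -/
open Matrix

variable {F : Type*} [Field F]

theorem stmt16 {F : Type*} [Field F] {n : ℕ} (hn : 1 ≤ n) :
    IsCommU2 (Matrix.fromBlocks (1 : Matrix (Fin n) (Fin n) F) 0 0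
      (!![1, 1; 0, 1] : Matrix (Fin 2) (Fin 2) F)) := by
  set z : Fin n := ⟨0, hn⟩ with hz
  set B : Matrix (Fin n) (Fin 2) F := Matrix.single z 1 (-1) with hB
  set C : Matrix (Fin 2) (Fin n) F := Matrix.single 0 z 1 with hC
  have hBC : B * C = 0 := by
    ext i j
    rw [hB, hC]
    simp [Matrix.mul_apply, Matrix.single, Fin.sum_univ_two]
  have hCB : C * B = Matrix.single (0 : Fin 2) 1 (-1) := by
    ext i j
    rw [hB, hC, Matrix.mul_apply, Finset.sum_eq_single z]
    · simp only [Matrix.single, Matrix.of_apply]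
      split_ifs <;> simp_all
    · intro b _ hb
      simp [Matrix.single, Ne.symm hb]
    · intro h
      simp at h
  have hCBC : (C * B) * C = 0 := by
    rw [hCB, hC]
    ext i j
    simp [Matrix.mul_apply, Matrix.single, Fin.sum_univ_two]
  set X : Matrix (Fin n ⊕ Fin 2) (Fin n ⊕ Fin 2) F := Matrix.fromBlocks 1 B 0 1 with hX
  set Y : Matrix (Fin n ⊕ Fin 2) (Fin n ⊕ Fin 2) F := Matrix.fromBlocks 1 0 C 1 with hY
  have hXinv : X⁻¹ = Matrix.fromBlocks 1 (-B) 0 1 := by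
    apply Matrix.inv_eq_right_inv
    rw [hX, Matrix.fromBlocks_multiply]
    simp [Matrix.fromBlocks_one]
  have hYinv : Y⁻¹ = Matrix.fromBlocks 1 0 (-C) 1 := by
    apply Matrix.inv_eq_right_inv
    rw [hY, Matrix.fromBlocks_multiply]
    simp [Matrix.fromBlocks_one]
  refine ⟨X, Y, ⟨?_, ?_⟩, ⟨?_, ?_⟩, ?_⟩
  · intro h
    have := congrArg (fun M => M (Sum.inl z) (Sum.inr 1)) h
    simp [hX, hB, Matrix.single, Matrix.one_apply] at this
  · have : X - 1 = Matrix.fromBlocks 0 B 0 0 := by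
      rw [hX, ← Matrix.fromBlocks_one]
      ext (i | i) (j | j) <;> simp [Matrix.fromBlocks]
    rw [sq, this, Matrix.fromBlocks_multiply]
    simp
  · intro h
    have := congrArg (fun M => M (Sum.inr 0) (Sum.inl z)) h
    simp [hY, hC, Matrix.single, Matrix.one_apply] at this
  · have : Y - 1 = Matrix.fromBlocks 0 0 C 0 := by
      rw [hY, ← Matrix.fromBlocks_one]
      ext (i | i) (j | j) <;> simp [Matrix.fromBlocks]
    rw [sq, this, Matrix.fromBlocks_multiply]
    simp
  · have e1 : X * Y = Matrix.fromBlocks 1 B C 1 := by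
      rw [hX, hY, Matrix.fromBlocks_multiply, hBC]
      simp
    have e2 : X * Y * X⁻¹ = Matrix.fromBlocks 1 0 C (1 - C * B) := by
      rw [e1, hXinv, Matrix.fromBlocks_multiply]
      simp [Matrix.mul_neg, sub_eq_add_neg, add_comm]
    have e3 : X * Y * X⁻¹ * Y⁻¹ = Matrix.fromBlocks 1 0 0 (1 - C * B) := by
      rw [e2, hYinv, Matrix.fromBlocks_multiply]
      simp [Matrix.mul_neg, Matrix.neg_mul, Matrix.sub_mul, Matrix.add_mul, hCBC, sub_eq_add_neg, add_comm]
    rw [e3]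
    have h12 : !![(1:F), 1; 0, 1] = 1 - C * B := by
      rw [hCB]
      ext i j
      fin_cases i <;> fin_cases j <;>
        simp [Matrix.single, Matrix.one_apply]
    rw [h12]
end
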